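/- arXiv:2511.08333 — 10 statements merged into one kernel-verified Lean document; each statement's English description precedes it below -/
import Mathlib

section
/- Let M be an n×n matrix with entries in {1,-1} and all diagonal entries equal to 1. Then the characteristic polynomial det(xI - M) = Σ_{i=0}^{n} a_i x^{n-i} satisfies a_0 = 1, a_1 = -n, and 2^(k-1) divides a_k for each k in {1,...,n}. -/
/-!
Substitute `2X` for `X`: the coefficient of `X^m` in `charpoly M (2X) = det (2X·I - M)` is
`2^m a_{n-m}`. All rows of a `±1`-matrix agree modulo 2, and so do the rows of `2X·I - M`;
subtracting the first row from the others and pulling a factor 2 out of each of them shows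
`2^(n-1) ∣ det (2X·I - M)`. Comparing coefficients of `X^(n-k)` gives `2^(k-1) ∣ a_k`.
-/

open Polynomial

namespace Matrix

variable {R : Type*} [CommRing R]

theorem pow_dvd_det_of_dvd_sub_row_zero {n : ℕ} (A : Matrix (Fin (n + 1)) (Fin (n + 1)) R)
    {c : R} (h : ∀ i j, c ∣ A i j - A 0 j) : c ^ n ∣ A.det := by
  choose D hD using h
  let E : Matrix (Fin (n + 1)) (Fin (n + 1)) R := of fun i j => if i = 0 then A 0 j else D i j
  have hrows : A.det = (of fun i j => (if i = 0 then 1 else c) * E i j).det := by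
    refine det_eq_of_forall_row_eq_smul_add_const (fun i => if i = 0 then 0 else 1) 0 (by simp) ?_
    intro i j
    by_cases hi : i = 0
    · simp [E, hi]
    · simp [E, hi, ← hD]
  rw [hrows, det_mul_column, Fin.prod_univ_succ]
  simp [Fin.succ_ne_zero]

theorem pow_dvd_charpoly_comp_C_mul_X {n : ℕ} (M : Matrix (Fin (n + 1)) (Fin (n + 1)) R)
    {c : R} (h : ∀ i j, c ∣ M i j - M 0 j) : C c ^ n ∣ M.charpoly.comp (C c * X) := by
  rw [charpoly, ← coe_compRingHom_apply, RingHom.map_det]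
  refine pow_dvd_det_of_dvd_sub_row_zero _ fun i j => ?_
  have hdiag : ∀ k, C c ∣ (diagonal (fun _ => (X : R[X])) k j).comp (C c * X) := fun k => by
    rw [diagonal_apply]; split_ifs <;> simp
  simp only [RingHom.mapMatrix_apply, map_apply, charmatrix_apply, coe_compRingHom_apply,
    sub_comp, C_comp]
  rw [sub_sub_sub_comm, ← C_sub]
  exact ((hdiag i).sub (hdiag 0)).sub (map_dvd C (h i j))

end Matrix

theorem Polynomial.pow_sub_dvd_coeff_of_pow_dvd_comp_C_mul_X {R : Type*} [CommRing R] [IsDomain R]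
    {c : R} (hc : c ≠ 0) {p : R[X]} {n m : ℕ}
    (h : C c ^ n ∣ p.comp (C c * X)) (hm : m ≤ n) : c ^ (n - m) ∣ p.coeff m := by
  have hcoeff := (C_dvd_iff_dvd_coeff _ _).mp (by simpa only [← C_pow] using h) m
  rw [comp_C_mul_X_coeff, ← Nat.sub_add_cancel hm, pow_add] at hcoeff
  exact (mul_dvd_mul_iff_right (pow_ne_zero m hc)).mp hcoeff

/-- For an `n×n` `{±1}`-matrix `M` with unit diagonal, writing
`det(xI - M) = Σ a_i x^(n-i)`, one has `a_0 = 1`, `a_1 = -n`, and `2^(k-1) ∣ a_k`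
for each `k ∈ {1,…,n}`. -/
theorem stmt3 (n : ℕ) (M : Matrix (Fin n) (Fin n) ℤ)
    (hent : ∀ i j, M i j = 1 ∨ M i j = -1) (hdiag : ∀ i, M i i = 1) :
    M.charpoly.coeff n = 1 ∧
    (1 ≤ n → M.charpoly.coeff (n - 1) = -(n : ℤ)) ∧
    (∀ k, 1 ≤ k → k ≤ n → (2 : ℤ) ^ (k - 1) ∣ M.charpoly.coeff (n - k)) := by
  refine ⟨?_, fun hn => ?_, fun k hk hkn => ?_⟩
  · simpa [Matrix.charpoly_natDegree_eq_dim] using M.charpoly_monic.coeff_natDegree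
  · have : Nonempty (Fin n) := ⟨⟨0, hn⟩⟩
    have htrace : M.trace = n := by simp [Matrix.trace, hdiag]
    have hcoeff := M.trace_eq_neg_charpoly_coeff
    rw [htrace, Fintype.card_fin] at hcoeff
    lia
  · obtain ⟨m, rfl⟩ : ∃ m, n = m + 1 := ⟨n - 1, by lia⟩
    have hrows : ∀ i j, (2 : ℤ) ∣ M i j - M 0 j := fun i j => by
      rcases hent i j with h | h <;> rcases hent 0 j with h' | h' <;> simp [h, h']
    have hcoeff := pow_sub_dvd_coeff_of_pow_dvd_comp_C_mul_X two_ne_zero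
      (M.pow_dvd_charpoly_comp_C_mul_X hrows) (show m + 1 - k ≤ m by lia)
    rwa [show m - (m + 1 - k) = k - 1 by lia] at hcoeff
end

section
/- Let M be an n×n {±1}-matrix with diagonal entries 1 such that M - I is skew-symmetric. Then the coefficient of x^(n-2) in det(xI - M) equals n(n-1). -/
open Matrix Finset

/-!
The coefficient of `x^(n-2)` in `det(xI - M)` is the sum of the `2 × 2` principal minors of `M`.
Skew-symmetry of `M - I` with `±1` entries gives `M j i = -M i j` and `(M i j)^2 = 1` off the
diagonal, so every such minor is `1 - M i j * M j i = 2`, and there are `n.choose 2` of them.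
-/

variable {ι R : Type*} [DecidableEq ι] [CommRing R]

lemma Matrix.apply_mul_apply_symm_eq_neg_one {M : Matrix ι ι R}
    (hent : ∀ i j, M i j = 1 ∨ M i j = -1) (hskew : (M - 1)ᵀ = -(M - 1)) {i j : ι}
    (hij : i ≠ j) : M i j * M j i = -1 := by
  have hji : M j i = -M i j := by
    simpa [one_apply_ne hij, one_apply_ne hij.symm] using congr_fun₂ hskew i j
  rcases hent i j with h | h <;> simp [hji, h]

variable [Fintype ι]

lemma Matrix.exists_det_eq_of_card_eq_two (A : Matrix ι ι R) (h : Fintype.card ι = 2) :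
    ∃ i j, i ≠ j ∧ A.det = A i i * A j j - A i j * A j i := by
  let e := (Fintype.equivFinOfCardEq h).symm
  refine ⟨e 0, e 1, e.injective.ne Fin.zero_ne_one, ?_⟩
  rw [← det_submatrix_equiv_self e, det_fin_two]
  rfl

lemma Matrix.det_eq_two_of_card_eq_two {A : Matrix ι ι R} (h : Fintype.card ι = 2)
    (hdiag : ∀ i, A i i = 1) (hoff : ∀ i j, i ≠ j → A i j * A j i = -1) : A.det = 2 := by
  obtain ⟨i, j, hij, hdet⟩ := A.exists_det_eq_of_card_eq_two h
  rw [hdet, hdiag, hdiag, hoff i j hij]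
  ring

/-- For an `n×n` `{±1}`-matrix `M` (with `n ≥ 2`) having unit diagonal
and `M - I` skew-symmetric, the coefficient of `x^(n-2)` in `det(xI - M)` is `n(n-1)`. -/
theorem stmt4 (n : ℕ) (hn : 2 ≤ n) (M : Matrix (Fin n) (Fin n) ℤ)
    (hent : ∀ i j, M i j = 1 ∨ M i j = -1) (hdiag : ∀ i, M i i = 1)
    (hskew : (M - 1)ᵀ = -(M - 1)) :
    M.charpoly.coeff (n - 2) = (n : ℤ) * ((n : ℤ) - 1) := by
  have hminor : ∀ s ∈ (univ : Finset (Fin n)).powersetCard 2,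
      (M.submatrix ((↑) : s → Fin n) (↑)).det = 2 := fun s hs =>
    det_eq_two_of_card_eq_two (by simpa using (mem_powersetCard.mp hs).2)
      (fun i => hdiag i)
      (fun i j hij => apply_mul_apply_symm_eq_neg_one hent hskew (Subtype.coe_injective.ne hij))
  have hchoose : (n.choose 2 * 2 : ℤ) = n * (n - 1) := by
    have : ((n.choose 2 * 2 : ℤ) : ℚ) = ((n * (n - 1) : ℤ) : ℚ) := by
      push_cast [Nat.cast_choose_two]; ring
    exact_mod_cast this
  have hcoeff := M.charpoly_coeff_eq_sum_minors 2 (by simpa using hn)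
  rw [Fintype.card_fin] at hcoeff
  rw [hcoeff, sum_congr rfl hminor, sum_const,
    card_powersetCard, card_univ, Fintype.card_fin, nsmul_eq_mul, hchoose]
  ring
end

section
/- Let M be an n×n {±1}-matrix with all diagonal entries 1 such that M - I is skew-symmetric, and write det(xI - M) = Σ_{i=0}^{n} a_i x^{n-i}. Then for every odd k in {1,...,n}, a_k = -Σ_{i=0}^{k-1} binom(n-i, n-k)·a_i. -/
/-!
The characteristic polynomial `q` of the skew-symmetric matrix `M - 1` satisfies
`q(-x) = (-1)^n q(x)` (transpose and negate `M - 1`), so its coefficient of `x^(n-k)` vanishes for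
odd `k`. Since `q(x) = p(x + 1)` for `p = charpoly M`, expanding that coefficient binomially in
the coefficients of `p` gives the identity.
-/

open Matrix Polynomial Finset

namespace Polynomial

variable {R : Type*} [CommRing R]

theorem coeff_comp_neg_X (p : R[X]) (j : ℕ) :
    (p.comp (-X)).coeff j = (-1) ^ j * p.coeff j := by
  induction p using Polynomial.induction_on' with
  | add f g hf hg => simp only [add_comp, coeff_add, hf, hg, mul_add]
  | monomial k a =>
    rw [monomial_comp, neg_pow, ← C_1, ← C_neg, ← C_pow, ← mul_assoc, ← C_mul,
      coeff_C_mul_X_pow, coeff_monomial]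
    split_ifs <;> simp_all [eq_comm, mul_comm]

theorem coeff_comp_X_add_one_sub (p : R[X]) {n k : ℕ} (hp : p.natDegree ≤ n) (hk : k ≤ n) :
    (p.comp (X + 1)).coeff (n - k) =
      ∑ i ∈ range (k + 1), ((n - i).choose (n - k) : R) * p.coeff (n - i) := by
  have hvanish : ∀ i ∈ range (n + 1), i ∉ range (k + 1) →
      ((n - i).choose (n - k) : R) * p.coeff (n - i) = 0 := fun i hi hik => by
    rw [Nat.choose_eq_zero_of_lt (by simp at hi hik; omega), Nat.cast_zero, zero_mul]
  conv_lhs => rw [p.as_sum_range' (n + 1) (Nat.lt_succ_of_le hp)]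
  simp only [sum_comp, monomial_comp, finsetSum_coeff, coeff_C_mul, coeff_X_add_one_pow]
  rw [← sum_range_reflect, sum_subset (range_subset_range.2 (by omega)) hvanish]
  simp only [Nat.add_sub_cancel, mul_comm]

end Polynomial

namespace Matrix

variable {n R : Type*} [DecidableEq n] [Fintype n] [CommRing R]

theorem charpoly_neg (A : Matrix n n R) :
    (-A).charpoly = (-1) ^ Fintype.card n * A.charpoly.comp (-X) := by
  have hsubst : (charmatrix A).map (eval₂RingHom C (-X)) = -charmatrix (-A) := by
    refine Matrix.ext fun i j => ?_
    by_cases hij : i = j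
    · subst hij; simp [charmatrix_apply_eq]; ring
    · simp [charmatrix_apply_ne _ _ _ hij]
  have hcomp : A.charpoly.comp (-X) = (-1) ^ Fintype.card n * (-A).charpoly := by
    change eval₂RingHom C (-X) A.charmatrix.det = _
    rw [RingHom.map_det, RingHom.mapMatrix_apply, hsubst, det_neg, charpoly]
  rw [hcomp, ← mul_assoc, ← pow_add, ← two_mul, pow_mul, neg_one_sq, one_pow, one_mul]

theorem coeff_charpoly_eq_zero_of_transpose_eq_neg [IsAddTorsionFree R] {A : Matrix n n R}
    (hA : Aᵀ = -A) {j : ℕ} (hj : Odd (Fintype.card n - j)) : A.charpoly.coeff j = 0 := by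
  have hsym : A.charpoly = (-1) ^ Fintype.card n * A.charpoly.comp (-X) := by
    rw [← charpoly_neg, ← hA, charpoly_transpose]
  have hsign : ((-1) ^ Fintype.card n * (-1) ^ j : R) = -1 := by
    rw [← pow_add, ← Nat.sub_add_cancel (show j ≤ Fintype.card n by grind), add_assoc,
      pow_add, hj.neg_one_pow, ← two_mul, pow_mul]
    simp
  have hcoeff := congrArg (coeff · j) hsym
  rw [← C_1, ← C_neg, ← C_pow, coeff_C_mul, coeff_comp_neg_X, ← mul_assoc, hsign,
    neg_one_mul] at hcoeff
  exact self_eq_neg.mp hcoeff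

end Matrix

theorem stmt5_general (n : ℕ) (M : Matrix (Fin n) (Fin n) ℤ)
    (hskew : (M - 1)ᵀ = -(M - 1)) :
    ∀ k, Odd k → 1 ≤ k → k ≤ n →
      M.charpoly.coeff (n - k) =
        -∑ i ∈ Finset.range k, ((n - i).choose (n - k) : ℤ) * M.charpoly.coeff (n - i) := by
  intro k hk _ hkn
  have hshift : (M - 1).charpoly = M.charpoly.comp (X + 1) := by
    simpa using charpoly_sub_scalar M 1
  have hdeg : M.charpoly.natDegree ≤ n := by simp
  have hzero : (M - 1).charpoly.coeff (n - k) = 0 :=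
    coeff_charpoly_eq_zero_of_transpose_eq_neg hskew
      (by rwa [Fintype.card_fin, Nat.sub_sub_self hkn])
  rw [hshift, coeff_comp_X_add_one_sub _ hdeg hkn, sum_range_succ, Nat.choose_self,
    Nat.cast_one, one_mul] at hzero
  linear_combination hzero

/-- For an `n×n` `{±1}`-matrix `M` with unit diagonal and `M - I`
skew-symmetric, writing `det(xI - M) = Σ a_i x^(n-i)`, for every odd `k ∈ {1,…,n}`:
`a_k = -Σ_{i=0}^{k-1} C(n-i, n-k) a_i`. -/
theorem stmt5 (n : ℕ) (M : Matrix (Fin n) (Fin n) ℤ)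
    (hent : ∀ i j, M i j = 1 ∨ M i j = -1) (hdiag : ∀ i, M i i = 1)
    (hskew : (M - 1)ᵀ = -(M - 1)) :
    ∀ k, Odd k → 1 ≤ k → k ≤ n →
      M.charpoly.coeff (n - k) =
        -∑ i ∈ Finset.range k, ((n - i).choose (n - k) : ℤ) * M.charpoly.coeff (n - i) :=
  stmt5_general n M hskew
end

section
/- Let M be an n×n {±1}-matrix with diagonal entries 1 such that M - I is skew-symmetric, with n odd, and write det(xI - M) = Σ a_i x^{n-i}. Then for every odd k in {1,...,n}, (n-k+1)·a_{k-1} + Σ_{i=0}^{k-2} binom(n-i, n-k)·a_i ≡ 0 mod 2^{k-1}. -/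
/-!
Write `p = M.charpoly = ∑ aᵢ X^(n-i)`. Then `p.comp (X + 1)` is the characteristic polynomial of
the skew-symmetric matrix `M - 1` of odd size, so it is an odd polynomial and its coefficient of
`X^(n-k)` vanishes for odd `k`. Expanding the powers `(X + 1)^(n-i)`, that coefficient is the
left-hand side of the congruence plus `a_k`. Finally `a_k` is `±` a sum of `k × k` principal
minors of `M`, each the determinant of a `±1` matrix; subtracting one row from the others
makes every other row even, so each minor is divisible by `2^(k-1)`.
-/

open Matrix Polynomial Finset

section Determinant

variable {R ι : Type*} [CommRing R] [Fintype ι] [DecidableEq ι]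

theorem Matrix.pow_card_sub_one_dvd_det_of_dvd_row (A : Matrix ι ι R) (d : R) (i₀ : ι)
    (h : ∀ i ≠ i₀, ∀ j, d ∣ A i j) : d ^ (Fintype.card ι - 1) ∣ A.det := by
  rw [det_apply']
  refine dvd_sum fun σ _ => Dvd.dvd.mul_left ?_ _
  rw [← mul_prod_erase univ _ (mem_univ (σ⁻¹ i₀)), ← card_univ,
    ← card_erase_of_mem (mem_univ (σ⁻¹ i₀)), ← prod_const]
  refine Dvd.dvd.mul_left (prod_dvd_prod_of_dvd _ _ fun i hi => h _ ?_ _) _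
  rintro hσ
  exact (mem_erase.mp hi).1 (by rw [← hσ]; simp)

theorem Matrix.pow_card_sub_one_dvd_det_of_dvd_sub_row (A : Matrix ι ι R) (d : R) (i₀ : ι)
    (h : ∀ i j, d ∣ A i j - A i₀ j) : d ^ (Fintype.card ι - 1) ∣ A.det := by
  set c : ι → R := fun i => if i = i₀ then 0 else 1
  set B : Matrix ι ι R := fun i j => A i j - c i * A i₀ j
  have hB : B i₀ = A i₀ := by ext j; simp [B, c]
  rw [det_eq_of_forall_row_eq_smul_add_const c i₀ (if_pos rfl) (B := B)
    (fun i j => by rw [hB]; simp [B])]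
  refine pow_card_sub_one_dvd_det_of_dvd_row B d i₀ fun i hi j => ?_
  simpa [B, c, hi] using h i j

theorem Matrix.two_pow_card_sub_one_dvd_det_of_odd (A : Matrix ι ι ℤ) (h : ∀ i j, Odd (A i j)) :
    2 ^ (Fintype.card ι - 1) ∣ A.det := by
  cases isEmpty_or_nonempty ι
  · simp
  · obtain ⟨i₀⟩ := ‹Nonempty ι›
    exact pow_card_sub_one_dvd_det_of_dvd_sub_row A 2 i₀ fun i j =>
      ((h i j).sub_odd (h i₀ j)).two_dvd

theorem Matrix.two_pow_sub_one_dvd_coeff_charpoly_of_odd (M : Matrix ι ι ℤ)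
    (h : ∀ i j, Odd (M i j)) {k : ℕ} (hk : k ≤ Fintype.card ι) :
    2 ^ (k - 1) ∣ M.charpoly.coeff (Fintype.card ι - k) := by
  rw [charpoly_coeff_eq_sum_minors M k hk]
  refine Dvd.dvd.mul_left (dvd_sum fun s hs => ?_) _
  have := two_pow_card_sub_one_dvd_det_of_odd (M.submatrix (Subtype.val : s → ι) Subtype.val)
    fun i j => h _ _
  rwa [Fintype.card_coe, (mem_powersetCard.mp hs).2] at this

end Determinant

section Polynomial

variable {R : Type*} [CommRing R]

theorem Polynomial.coeff_comp_neg_X_s6 (p : R[X]) (m : ℕ) :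
    (p.comp (-X)).coeff m = (-1) ^ m * p.coeff m := by
  induction p using Polynomial.induction_on' with
  | add f g hf hg => rw [add_comp, coeff_add, hf, hg, coeff_add, mul_add]
  | monomial e a =>
    rw [monomial_comp, neg_pow, ← C_1, ← C_neg, ← C_pow, ← mul_assoc, ← C_mul, coeff_C_mul_X_pow,
      coeff_monomial]
    obtain rfl | h := eq_or_ne m e
    · simp [mul_comm]
    · simp [h, Ne.symm h]

theorem Polynomial.coeff_taylor_one_eq_sum_reflect (p : R[X]) {n m : ℕ} (hp : p.natDegree ≤ n)
    (hm : m ≤ n) :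
    (taylor 1 p).coeff m = ∑ i ∈ range (n - m + 1), ((n - i).choose m : R) * p.coeff (n - i) := by
  rw [taylor_coeff, hasseDeriv_apply, sum_over_range' _ (fun _ => by simp) (n + 1)
    (Nat.lt_succ_of_le hp), eval_finsetSum, ← sum_range_reflect]
  simp only [eval_monomial, one_pow, mul_one, Nat.add_sub_cancel]
  refine (sum_subset (range_subset_range.mpr (by omega)) fun i hi hni => ?_).symm
  simp only [mem_range] at hi hni
  rw [Nat.choose_eq_zero_of_lt (by omega), Nat.cast_zero, zero_mul]

end Polynomial

section SkewSymmetric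

variable {R ι : Type*} [CommRing R] [Fintype ι] [DecidableEq ι]

theorem Matrix.charpoly_neg_s6 (S : Matrix ι ι R) :
    (-S).charpoly = (-1) ^ Fintype.card ι * S.charpoly.comp (-X) := by
  have : charmatrix (-S) = -(compRingHom (-X)).mapMatrix (charmatrix S) := by
    refine Matrix.ext fun i j => ?_
    by_cases h : i = j
    · subst h; simp [add_comm]
    · simp [charmatrix_apply_ne _ _ _ h]
  rw [charpoly, this, det_neg, ← RingHom.map_det]
  rfl

theorem Matrix.coeff_charpoly_eq_zero_of_transpose_eq_neg_s6 [NoZeroDivisors R] [CharZero R]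
    {S : Matrix ι ι R} (hS : Sᵀ = -S) {m : ℕ} (hm : Odd (Fintype.card ι + m)) :
    S.charpoly.coeff m = 0 := by
  have hodd : S.charpoly = (-1) ^ Fintype.card ι * S.charpoly.comp (-X) := by
    rw [← charpoly_neg_s6, ← hS, charpoly_transpose]
  have h := congrArg (coeff · m) hodd
  rw [← C_1, ← C_neg, ← C_pow, coeff_C_mul, coeff_comp_neg_X_s6, ← mul_assoc, ← pow_add,
    hm.neg_one_pow, neg_one_mul] at h
  exact CharZero.eq_neg_self_iff.mp h

end SkewSymmetric

theorem stmt6_general (n : ℕ) (hodd : Odd n) (M : Matrix (Fin n) (Fin n) ℤ)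
    (hent : ∀ i j, M i j = 1 ∨ M i j = -1)
    (hskew : (M - 1)ᵀ = -(M - 1)) :
    ∀ k, Odd k → 1 ≤ k → k ≤ n →
      (2 : ℤ) ^ (k - 1) ∣
        ((n - k + 1 : ℕ) : ℤ) * M.charpoly.coeff (n - (k - 1)) +
          ∑ i ∈ Finset.range (k - 1),((n - i).choose (n - k) : ℤ) * M.charpoly.coeff (n - i) := by
  intro k hk hk1 hkn
  have hvanish : (taylor 1 M.charpoly).coeff (n - k) = 0 := by
    rw [taylor_apply, ← charpoly_sub_scalar, map_one]
    refine coeff_charpoly_eq_zero_of_transpose_eq_neg_s6 hskew ?_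
    rw [Fintype.card_fin]
    exact Nat.odd_add.mpr ⟨fun _ => Nat.Odd.sub_odd hodd hk, fun _ => hodd⟩
  obtain ⟨j, rfl⟩ : ∃ j, k = j + 1 := ⟨k - 1, by omega⟩
  rw [coeff_taylor_one_eq_sum_reflect _ (M.charpoly_natDegree_eq_dim.trans (Fintype.card_fin n)).le
    (by omega), Nat.sub_sub_self hkn, sum_range_succ, sum_range_succ, Nat.choose_self,
    show n - j = n - (j + 1) + 1 by omega, Nat.choose_succ_self_right] at hvanish
  simp only [Nat.add_sub_cancel, Nat.cast_one, one_mul] at hvanish ⊢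
  rw [show n - j = n - (j + 1) + 1 by omega, add_comm, eq_neg_of_add_eq_zero_left hvanish,
    dvd_neg]
  simpa using M.two_pow_sub_one_dvd_coeff_charpoly_of_odd
    (fun a b => (hent a b).elim (· ▸ odd_one) (· ▸ odd_neg_one)) (k := j + 1) (by simpa)

/-- For an `n×n` `{±1}`-matrix `M` with unit diagonal, `M - I`
skew-symmetric, and `n` odd, writing `det(xI - M) = Σ a_i x^(n-i)`, for every odd
`k ∈ {1,…,n}`: `(n-k+1)·a_{k-1} + Σ_{i=0}^{k-2} C(n-i, n-k)·a_i ≡ 0 mod 2^(k-1)`. -/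
theorem stmt6 (n : ℕ) (hodd : Odd n) (M : Matrix (Fin n) (Fin n) ℤ)
    (hent : ∀ i j, M i j = 1 ∨ M i j = -1) (hdiag : ∀ i, M i i = 1)
    (hskew : (M - 1)ᵀ = -(M - 1)) :
    ∀ k, Odd k → 1 ≤ k → k ≤ n →
      (2 : ℤ) ^ (k - 1) ∣
        ((n - k + 1 : ℕ) : ℤ) * M.charpoly.coeff (n - (k - 1)) +
          ∑ i ∈ Finset.range (k - 1),((n - i).choose (n - k) : ℤ) * M.charpoly.coeff (n - i) :=
  stmt6_general n hodd M hent hskew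
end

section
/- Let n ≥ 2 and m be positive integers. In the path P_{2n-1}, let v be the central vertex (at distance n-1 from each leaf), and in P_{2n-1+2^m} let w be a vertex at distance n-1 from the nearest leaf. Then [A(P_{2n-1})^n 𝟏]_v = 2^n - 2, [A(P_{2n-1+2^m})^n 𝟏]_w = 2^n - 1, [A(P_{2n-1})^{2n}]_{v,v} = binom(2n,n) - 2, and [A(P_{2n-1+2^m})^{2n}]_{w,w} = binom(2n,n) - 1. -/
/-- Adjacency matrix of the path graph on `n` vertices `0,…,n-1`,
with edges `{i, i+1}`. -/
def pathAdj (n : ℕ) : Matrix (Fin n) (Fin n) ℤ :=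
  fun i j => if (i.val + 1 = j.val ∨ j.val + 1 = i.val) then 1 else 0

/-
A walk on `P_N` is a walk on `ℤ` that stays in `[0, N)`. Let `intWalks k d` count the walks on
`ℤ` of length `k` and displacement `d`. The columns `k ↦ A^k e_v` solve the discrete heat
equation `F (k+1) x = F k (x-1) + F k (x+1)` with zero values at `-1` and `N`, and by the
reflection principle so does
`intWalks k (v - x) - intWalks k (v + x + 2) - intWalks k (v + x - 2N)` as long as `k ≤ N + 1`;
hence the two agree. At a vertex at distance `n - 1` from a leaf, the reflected terms for
`k = 2n` are `1` for each leaf at that distance (the straight walk out and back) and `0`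
otherwise, while `intWalks (2n) 0 = binom(2n, n)`. Similarly, a walk of length `n` from such a
vertex can leave the path only at its last step, and only by going straight to a nearest leaf.
-/

open Matrix

def intWalks : ℕ → ℤ → ℤ
  | 0, d => if d = 0 then 1 else 0
  | k + 1, d => intWalks k (d - 1) + intWalks k (d + 1)

lemma intWalks_succ (k : ℕ) (d : ℤ) :
    intWalks (k + 1) d = intWalks k (d - 1) + intWalks k (d + 1) := rfl

lemma intWalks_eq_zero_of_lt_abs {k : ℕ} {d : ℤ} (h : (k : ℤ) < |d|) : intWalks k d = 0 := by
  induction k generalizing d with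
  | zero => simp [intWalks, abs_pos.mp (by omega : (0 : ℤ) < |d|)]
  | succ k ih =>
    rw [lt_abs] at h
    rw [intWalks_succ, ih (by rw [lt_abs]; omega), ih (by rw [lt_abs]; omega), add_zero]

lemma intWalks_two_mul_sub (k m : ℕ) : intWalks k (2 * m - k) = k.choose m := by
  induction k generalizing m with
  | zero => rcases m with _ | m <;> simp [intWalks]; omega
  | succ k ih =>
    rw [intWalks_succ]
    rcases m with _ | m
    · rw [intWalks_eq_zero_of_lt_abs (by rw [lt_abs]; push_cast; omega), zero_add]
      simpa using ih 0
    · have h := ih m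
      have h' := ih (m + 1)
      push_cast at h h' ⊢
      rw [Nat.choose_succ_succ, Nat.cast_add, ← h, ← h']
      congr 2 <;> ring

lemma intWalks_self (k : ℕ) : intWalks k k = 1 := by
  simpa [two_mul] using intWalks_two_mul_sub k k

lemma intWalks_neg_self (k : ℕ) : intWalks k (-k) = 1 := by
  simpa using intWalks_two_mul_sub k 0

lemma intWalks_two_mul_zero (n : ℕ) : intWalks (2 * n) 0 = (2 * n).choose n := by
  simpa using intWalks_two_mul_sub (2 * n) n

section PathGraph

variable {N : ℕ}

noncomputable def zeroExt (g : Fin N → ℤ) : ℤ → ℤ :=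
  Function.extend (fun i : Fin N => (i : ℤ)) g 0

lemma zeroExt_coe (g : Fin N → ℤ) (i : Fin N) : zeroExt g i = g i :=
  (Nat.cast_injective.comp Fin.val_injective).extend_apply g 0 i

lemma zeroExt_eq_zero (g : Fin N → ℤ) {x : ℤ} (hx : x < 0 ∨ N ≤ x) : zeroExt g x = 0 :=
  Function.extend_apply' _ _ _ (by rintro ⟨i, rfl⟩; omega)

lemma sum_ite_coe_eq_zeroExt (g : Fin N → ℤ) (x : ℤ) :
    ∑ j : Fin N, (if (j : ℤ) = x then g j else 0) = zeroExt g x := by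
  by_cases hx : ∃ i : Fin N, (i : ℤ) = x
  · obtain ⟨i, rfl⟩ := hx
    simp only [Nat.cast_inj, Fin.val_inj]
    rw [Finset.sum_ite_eq', if_pos (Finset.mem_univ i), zeroExt_coe]
  · rw [zeroExt, Function.extend_apply' _ _ _ hx]
    exact Finset.sum_eq_zero fun j _ => if_neg fun h => hx ⟨j, h⟩

lemma pathAdj_mulVec_apply (g : Fin N → ℤ) (i : Fin N) :
    (pathAdj N *ᵥ g) i = zeroExt g (i - 1) + zeroExt g (i + 1) := by
  rw [mulVec, dotProduct, ← sum_ite_coe_eq_zeroExt g, ← sum_ite_coe_eq_zeroExt g,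
    ← Finset.sum_add_distrib]
  refine Finset.sum_congr rfl fun j _ => ?_
  simp only [pathAdj]
  split_ifs <;> omega

lemma pathAdj_pow_mulVec_apply_of_recurrence (g : Fin N → ℤ) (F : ℕ → ℤ → ℤ) (K : ℕ)
    (hrec : ∀ k x, F (k + 1) x = F k (x - 1) + F k (x + 1))
    (hbdry : ∀ k < K, F k (-1) = 0 ∧ F k N = 0) (hinit : ∀ i : Fin N, F 0 i = g i) :
    ∀ k ≤ K, ∀ i : Fin N, (pathAdj N ^ k *ᵥ g) i = F k i := by
  intro k
  induction k with
  | zero => simp [hinit]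
  | succ k ih =>
    intro hk i
    have hext : ∀ x : ℤ, -1 ≤ x → x ≤ N → zeroExt (pathAdj N ^ k *ᵥ g) x = F k x := by
      intro x hx₁ hx₂
      obtain rfl | rfl | ⟨j, rfl⟩ : x = -1 ∨ x = N ∨ ∃ j : Fin N, (j : ℤ) = x := by
        by_cases h : x = -1 ∨ x = N
        · tauto
        · exact Or.inr (Or.inr ⟨⟨x.toNat, by omega⟩, by simp; omega⟩)
      · rw [zeroExt_eq_zero _ (by omega), (hbdry k (by omega)).1]
      · rw [zeroExt_eq_zero _ (by omega), (hbdry k (by omega)).2]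
      · rw [zeroExt_coe, ih (by omega)]
    rw [pow_succ', ← mulVec_mulVec, pathAdj_mulVec_apply, hext _ (by omega) (by omega),
      hext _ (by omega) (by omega), hrec]

lemma pathAdj_pow_apply {k : ℕ} (hk : k ≤ N + 1) (i j : Fin N) :
    (pathAdj N ^ k) i j
      = intWalks k (j - i) - intWalks k (j + i + 2) - intWalks k (j + i - 2 * N) := by
  have hcol := pathAdj_pow_mulVec_apply_of_recurrence (Pi.single j 1)
    (fun k x => intWalks k (j - x) - intWalks k (j + x + 2) - intWalks k (j + x - 2 * N))
    (N + 1) ?_ ?_ ?_ k hk i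
  · simpa [mulVec_single_one] using hcol
  · intro k x
    simp only [intWalks_succ]
    ring_nf
  · intro k hk
    have hj := j.isLt
    constructor
    · rw [show (j : ℤ) + -1 + 2 = j - -1 by ring, sub_self,
        intWalks_eq_zero_of_lt_abs (d := j + -1 - 2 * N) (by rw [lt_abs]; omega), sub_zero]
    · rw [show (j : ℤ) + N - 2 * N = j - N by ring,
        intWalks_eq_zero_of_lt_abs (d := j + N + 2) (by rw [lt_abs]; omega), sub_zero, sub_self]
  · intro i'
    have hi' := i'.isLt
    have hj := j.isLt
    rw [intWalks_eq_zero_of_lt_abs (d := j + i' + 2) (by rw [lt_abs]; omega),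
      intWalks_eq_zero_of_lt_abs (d := j + i' - 2 * N) (by rw [lt_abs]; omega)]
    by_cases h : i' = j
    · subst h; simp [intWalks]
    · simp [intWalks, h, sub_eq_zero, Fin.val_eq_val, Ne.symm h]

lemma pathAdj_pow_mulVec_one_apply {j : ℕ} (i : Fin N) (h₁ : j ≤ i + 1) (h₂ : j + i ≤ N) :
    (pathAdj N ^ j *ᵥ fun _ => 1) i
      = 2 ^ j - (if j = i + 1 then 1 else 0) - (if j = N - i then 1 else 0) := by
  induction j generalizing i with
  | zero => simp [(Nat.sub_ne_zero_of_lt i.isLt).symm]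
  | succ j ih =>
    rw [pow_succ', ← mulVec_mulVec, pathAdj_mulVec_apply]
    obtain rfl | hj := Nat.eq_zero_or_pos j
    · have hone (x : ℤ) :
          zeroExt (fun _ : Fin N => (1 : ℤ)) x = if 0 ≤ x ∧ x < N then 1 else 0 := by
        split_ifs with hx
        · rw [show x = ((⟨x.toNat, by omega⟩ : Fin N) : ℤ) by simp; omega, zeroExt_coe]
        · exact zeroExt_eq_zero _ (by omega)
      simp only [pow_zero, one_mulVec, hone]
      split_ifs <;> omega
    · obtain ⟨iPred, hpred⟩ : ∃ i' : Fin N, (i' : ℤ) = i - 1 :=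
        ⟨⟨i - 1, by omega⟩, by simp; omega⟩
      obtain ⟨iSucc, hsucc⟩ : ∃ i' : Fin N, (i' : ℤ) = i + 1 := ⟨⟨i + 1, by omega⟩, by simp⟩
      rw [← hpred, ← hsucc, zeroExt_coe, zeroExt_coe, ih iPred (by omega) (by omega),
        ih iSucc (by omega) (by omega)]
      split_ifs <;> omega

end PathGraph

theorem stmt10_general (n m : ℕ)
    (v : Fin (2 * n - 1)) (w : Fin (2 * n - 1 + 2 ^ m))
    (hv : min v.val ((2 * n - 1) - 1 - v.val) = n - 1)
    (hw : min w.val ((2 * n - 1 + 2 ^ m) - 1 - w.val) = n - 1) :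
    ((pathAdj (2 * n - 1) ^ n).mulVec (fun _ => 1)) v = 2 ^ n - 2 ∧
    ((pathAdj (2 * n - 1 + 2 ^ m) ^ n).mulVec (fun _ => 1)) w = 2 ^ n - 1 ∧
    (pathAdj (2 * n - 1) ^ (2 * n)) v v = ((2 * n).choose n : ℤ) - 2 ∧
    (pathAdj (2 * n - 1 + 2 ^ m) ^ (2 * n)) w w = ((2 * n).choose n : ℤ) - 1 := by
  have hv' : (v : ℕ) = n - 1 := by omega
  have hw' : (w : ℕ) = n - 1 ∨ (w : ℕ) = n - 1 + 2 ^ m := by omega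
  have hpow : 1 ≤ 2 ^ m := Nat.one_le_two_pow
  have hvanish (d : ℤ) (hd : 2 * n < |d|) : intWalks (2 * n) d = 0 :=
    intWalks_eq_zero_of_lt_abs (by exact_mod_cast hd)
  refine ⟨?_, ?_, ?_, ?_⟩
  · rw [pathAdj_pow_mulVec_one_apply v (by omega) (by omega)]
    split_ifs <;> omega
  · rw [pathAdj_pow_mulVec_one_apply w (by omega) (by omega)]
    split_ifs <;> omega
  · rw [pathAdj_pow_apply (by omega), sub_self, intWalks_two_mul_zero,
      show (v : ℤ) + v + 2 = ((2 * n : ℕ) : ℤ) by omega, intWalks_self,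
      show (v : ℤ) + v - 2 * ((2 * n - 1 : ℕ) : ℤ) = -((2 * n : ℕ) : ℤ) by omega,
      intWalks_neg_self]
    ring
  · rw [pathAdj_pow_apply (by omega), sub_self, intWalks_two_mul_zero]
    rcases hw' with hw' | hw'
    · rw [show (w : ℤ) + w + 2 = ((2 * n : ℕ) : ℤ) by omega, intWalks_self,
        hvanish _ (by rw [lt_abs]; omega)]
      ring
    · rw [hvanish ((w : ℤ) + w + 2) (by rw [lt_abs]; omega),
        show (w : ℤ) + w - 2 * ((2 * n - 1 + 2 ^ m : ℕ) : ℤ) = -((2 * n : ℕ) : ℤ) by omega,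
        intWalks_neg_self]
      ring

/-- Walk counts for `(n-1)`-central vertices in the paths `P_{2n-1}`
and `P_{2n-1+2^m}` (Proposition 4.3(i)). -/
theorem stmt10 (n m : ℕ) (hn : 2 ≤ n) (hm : 1 ≤ m)
    (v : Fin (2 * n - 1)) (w : Fin (2 * n - 1 + 2 ^ m))
    (hv : min v.val ((2 * n - 1) - 1 - v.val) = n - 1)
    (hw : min w.val ((2 * n - 1 + 2 ^ m) - 1 - w.val) = n - 1) :
    ((pathAdj (2 * n - 1) ^ n).mulVec (fun _ => 1)) v = 2 ^ n - 2 ∧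
    ((pathAdj (2 * n - 1 + 2 ^ m) ^ n).mulVec (fun _ => 1)) w = 2 ^ n - 1 ∧
    (pathAdj (2 * n - 1) ^ (2 * n)) v v = ((2 * n).choose n : ℤ) - 2 ∧
    (pathAdj (2 * n - 1 + 2 ^ m) ^ (2 * n)) w w = ((2 * n).choose n : ℤ) - 1 :=
  stmt10_general n m v w hv hw
end

section
/- Let Γ₁ and Γ₂ be tournaments, and let Γ₁ ⊕ Γ₂ be the tournament whose adjacency matrix is the block matrix [[A₁, 0],[J, A₂]] (all arcs from Γ₂'s vertices to Γ₁'s vertices). Then for every k ∈ ℕ, 𝟏ᵀA(Γ₁⊕Γ₂)^k 𝟏 = 𝟏ᵀA₁^k 𝟏 + 𝟏ᵀA₂^k 𝟏 + Σ_{i=1}^{k} (𝟏ᵀA₁^{i-1}𝟏)·(𝟏ᵀA₂^{k-i}𝟏). -/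
/-!
The join matrix is block lower triangular, so its `k`-th power has diagonal blocks `A₁ᵏ`, `A₂ᵏ`
and lower-left block `∑_{j<k} A₂^(k-1-j) J A₁^j`. Since `J = 𝟏 𝟏ᵀ`, the entry sum of each term
`A₂^a J A₁^b` factors as `(𝟏ᵀ A₂^a 𝟏)(𝟏ᵀ A₁^b 𝟏)`.
-/

/-- A `{0,1}` matrix is the adjacency matrix of a tournament: zero diagonal and,
for each pair of distinct indices, exactly one of the two opposite arcs present. -/
def IsTournament {V : Type*} (A : Matrix V V ℤ) : Prop :=
  (∀ i, A i i = 0) ∧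
    ∀ i j, i ≠ j → (A i j = 1 ∧ A j i = 0) ∨ (A i j = 0 ∧ A j i = 1)

open Finset Matrix

variable {R : Type*} {l m n o : Type*} [Fintype l] [Fintype m] [Fintype n] [Fintype o]

section AddCommMonoid

variable [AddCommMonoid R]

/-- `𝟏ᵀ M 𝟏`, which counts walks when `M` is a power of an adjacency matrix. -/
def entrySum (M : Matrix m n R) : R := ∑ u, ∑ v, M u v

theorem entrySum_fromBlocks (A : Matrix m l R) (B : Matrix m o R) (C : Matrix n l R)
    (D : Matrix n o R) :
    entrySum (fromBlocks A B C D) = entrySum A + entrySum B + (entrySum C + entrySum D) := by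
  simp only [entrySum, Fintype.sum_sum_type, fromBlocks_apply₁₁, fromBlocks_apply₁₂,
    fromBlocks_apply₂₁, fromBlocks_apply₂₂, sum_add_distrib]
  exact add_add_add_comm _ _ _ _

theorem entrySum_zero : entrySum (0 : Matrix m n R) = 0 := by
  simp [entrySum]

theorem entrySum_sum {ι : Type*} (s : Finset ι) (M : ι → Matrix m n R) :
    entrySum (∑ i ∈ s, M i) = ∑ i ∈ s, entrySum (M i) := by
  simp only [entrySum, Matrix.sum_apply]
  exact (sum_congr rfl fun _ _ => Finset.sum_comm).trans Finset.sum_comm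

end AddCommMonoid

section Semiring

variable [Semiring R]

theorem entrySum_mul_allOnes_mul (X : Matrix m n R) (Y : Matrix l o R) :
    entrySum (X * (of fun _ _ => 1 : Matrix n l R) * Y) = entrySum X * entrySum Y := by
  simp only [entrySum, mul_apply, of_apply, mul_one, ← mul_sum, ← sum_mul]
  rw [sum_comm (s := univ) (t := univ) (f := fun v q => Y q v)]

theorem fromBlocks_zero₁₂_pow [DecidableEq m] [DecidableEq n] (A : Matrix m m R)
    (C : Matrix n m R) (D : Matrix n n R) (k : ℕ) :
    fromBlocks A 0 C D ^ k =
      fromBlocks (A ^ k) 0 (∑ j ∈ range k, D ^ (k - 1 - j) * C * A ^ j) (D ^ k) := by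
  induction k with
  | zero => simp [fromBlocks_one]
  | succ k ih =>
    have hC : ∑ j ∈ range (k + 1), D ^ (k + 1 - 1 - j) * C * A ^ j =
        D * ∑ j ∈ range k, D ^ (k - 1 - j) * C * A ^ j + C * A ^ k := by
      rw [sum_range_succ, Matrix.mul_sum, Nat.add_sub_cancel, Nat.sub_self, pow_zero,
        Matrix.one_mul]
      congr 1
      refine sum_congr rfl fun j hj => ?_
      rw [show k - j = k - 1 - j + 1 by grind, pow_succ', Matrix.mul_assoc,
        Matrix.mul_assoc, Matrix.mul_assoc]
    rw [pow_succ', ih, fromBlocks_multiply, hC]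
    simp [pow_succ', add_comm]

end Semiring

theorem entrySum_fromBlocks_allOnes_pow [CommSemiring R] [DecidableEq m] [DecidableEq n]
    (A : Matrix m m R) (D : Matrix n n R) (k : ℕ) :
    entrySum (fromBlocks A 0 (of fun _ _ => 1) D ^ k) =
      entrySum (A ^ k) + entrySum (D ^ k) +
        ∑ i ∈ Icc 1 k, entrySum (A ^ (i - 1)) * entrySum (D ^ (k - i)) := by
  have hreindex : ∑ i ∈ Icc 1 k, entrySum (A ^ (i - 1)) * entrySum (D ^ (k - i)) =
      ∑ j ∈ range k, entrySum (D ^ (k - 1 - j)) * entrySum (A ^ j) := by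
    rw [← Ico_add_one_right_eq_Icc, sum_Ico_eq_sum_range, add_tsub_cancel_right]
    refine sum_congr rfl fun j _ => ?_
    rw [add_tsub_cancel_left, Nat.sub_sub, add_comm 1 j, mul_comm]
  rw [fromBlocks_zero₁₂_pow, entrySum_fromBlocks, entrySum_zero, entrySum_sum, hreindex]
  simp only [entrySum_mul_allOnes_mul]
  abel

theorem stmt12_general (m l : ℕ) (A₁ : Matrix (Fin m) (Fin m) ℤ) (A₂ : Matrix (Fin l) (Fin l) ℤ)
    (k : ℕ) :
    (∑ u, ∑ v, ((Matrix.fromBlocks A₁ 0 (Matrix.of fun _ _ => 1) A₂) ^ k) u v) =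
      (∑ u, ∑ v, (A₁ ^ k) u v) + (∑ u, ∑ v, (A₂ ^ k) u v) +
        ∑ i ∈ Finset.Icc 1 k,
          (∑ u, ∑ v, (A₁ ^ (i - 1)) u v) * (∑ u, ∑ v, (A₂ ^ (k - i)) u v) :=
  entrySum_fromBlocks_allOnes_pow A₁ A₂ k

/-- Walk counts in the join `Γ₁ ⊕ Γ₂` of two tournaments, whose
adjacency matrix is the block matrix `[[A₁, 0], [J, A₂]]`. -/
theorem stmt12 (m l : ℕ) (A₁ : Matrix (Fin m) (Fin m) ℤ) (A₂ : Matrix (Fin l) (Fin l) ℤ)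
    (h₁ : IsTournament A₁) (h₂ : IsTournament A₂) (k : ℕ) :
    (∑ u, ∑ v, ((Matrix.fromBlocks A₁ 0 (Matrix.of fun _ _ => 1) A₂) ^ k) u v) =
      (∑ u, ∑ v, (A₁ ^ k) u v) + (∑ u, ∑ v, (A₂ ^ k) u v) +
        ∑ i ∈ Finset.Icc 1 k,
          (∑ u, ∑ v, (A₁ ^ (i - 1)) u v) * (∑ u, ∑ v, (A₂ ^ (k - i)) u v) :=
  stmt12_general m l A₁ A₂ k
end

section
/- Let T_t be the almost transitive tournament on vertices {0,1,...,t+1}: there is an arc from i to j whenever i < j, except the arc between 0 and t+1 is reversed (arc from t+1 to 0). Then det(xI - A(T_t)) = x^{t+2} - Σ_{i=1}^{t} binom(t,i)·x^{t-i}. -/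
open Polynomial Matrix

/-- Adjacency matrix of the almost transitive tournament `T_t` on vertices
`{0,…,t+1}`: arc from `i` to `j` whenever `i < j`, except the arc between `0` and
`t+1` is reversed. -/
def almostTransMat (t : ℕ) : Matrix (Fin (t + 2)) (Fin (t + 2)) ℤ :=
  fun i j =>
    if (i.val < j.val ∧ ¬(i.val = 0 ∧ j.val = t + 1)) ∨ (i.val = t + 1 ∧ j.val = 0)
    then 1 else 0

/-!
Expand `det (X - A)` along column `0`, whose only nonzero entries are `X` in row `0` and `-1`
in row `t + 1`. Deleting row `0` leaves an upper triangular matrix with diagonal `X`. Deleting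
row `t + 1` leaves an upper Hessenberg matrix with `a = X` on the subdiagonal, `b = -1` on and
above the diagonal, except for a corner entry `c = 0`. Expanding such a matrix along its first
column gives a two-term recursion, solved by `b (b - a)^m - (b - c) (-a)^m`. So the
characteristic polynomial is `X^(t+2) - ((X + 1)^t - X^t)`, and the binomial theorem finishes.
-/

section Hessenberg

variable {R : Type*} [CommRing R]

theorem det_succ_column_zero_of_forall_succ_succ_eq_zero {n : ℕ}
    (M : Matrix (Fin (n + 2)) (Fin (n + 2)) R)
    (hM : ∀ i : Fin n, M i.succ.succ 0 = 0) :
    M.det = M 0 0 * (M.submatrix Fin.succ Fin.succ).det -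
      M 1 0 * (M.submatrix (Fin.succAbove 1) Fin.succ).det := by
  rw [det_succ_column_zero, Fin.sum_univ_succ, Fin.sum_univ_succ,
    Finset.sum_eq_zero fun i _ => by rw [hM i, mul_zero, zero_mul]]
  simp only [Fin.val_zero, Fin.succAbove_zero, Fin.val_one, pow_zero, one_mul, add_zero,
    Fin.succ_zero_eq_one]
  ring

def hessenbergToeplitz (a b : R) (n : ℕ) : Matrix (Fin n) (Fin n) R :=
  of fun i j => if (i : ℕ) = j + 1 then a else if i ≤ j then b else 0

def hessenbergToeplitzCorner (a b c : R) (n : ℕ) : Matrix (Fin n) (Fin n) R :=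
  of fun i j => if (i : ℕ) = 0 ∧ (j : ℕ) + 1 = n then c else hessenbergToeplitz a b n i j

theorem det_hessenbergToeplitz (a b : R) (k : ℕ) :
    (hessenbergToeplitz a b (k + 1)).det = b * (b - a) ^ k := by
  induction k with
  | zero => simp [hessenbergToeplitz]
  | succ k ih =>
    have hminor0 : (hessenbergToeplitz a b (k + 2)).submatrix Fin.succ Fin.succ =
        hessenbergToeplitz a b (k + 1) := by
      ext i j
      simp [hessenbergToeplitz]
    have hminor1 : (hessenbergToeplitz a b (k + 2)).submatrix (Fin.succAbove 1) Fin.succ =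
        hessenbergToeplitz a b (k + 1) := by
      ext i j : 2
      induction i using Fin.cases with
      | zero => simp [hessenbergToeplitz]
      | succ i => simp [hessenbergToeplitz, Fin.succAbove, Fin.lt_def]
    rw [det_succ_column_zero_of_forall_succ_succ_eq_zero _ fun i => by simp [hessenbergToeplitz],
      hminor0, hminor1, ih,
      show hessenbergToeplitz a b (k + 2) 0 0 = b by simp [hessenbergToeplitz],
      show hessenbergToeplitz a b (k + 2) 1 0 = a by simp [hessenbergToeplitz]]
    ring

theorem det_hessenbergToeplitzCorner (a b c : R) (m : ℕ) :
    (hessenbergToeplitzCorner a b c (m + 1)).det = b * (b - a) ^ m - (b - c) * (-a) ^ m := by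
  induction m with
  | zero => simp [hessenbergToeplitzCorner]
  | succ m ih =>
    have hminor0 : (hessenbergToeplitzCorner a b c (m + 2)).submatrix Fin.succ Fin.succ =
        hessenbergToeplitz a b (m + 1) := by
      ext i j
      simp [hessenbergToeplitzCorner, hessenbergToeplitz]
    have hminor1 : (hessenbergToeplitzCorner a b c (m + 2)).submatrix (Fin.succAbove 1) Fin.succ =
        hessenbergToeplitzCorner a b c (m + 1) := by
      ext i j : 2
      induction i using Fin.cases with
      | zero => simp [hessenbergToeplitzCorner, hessenbergToeplitz]
      | succ i => simp [hessenbergToeplitzCorner, hessenbergToeplitz, Fin.succAbove, Fin.lt_def]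
    rw [det_succ_column_zero_of_forall_succ_succ_eq_zero _
        fun i => by simp [hessenbergToeplitzCorner, hessenbergToeplitz],
      hminor0, hminor1, ih, det_hessenbergToeplitz,
      show hessenbergToeplitzCorner a b c (m + 2) 0 0 = b by
        simp [hessenbergToeplitzCorner, hessenbergToeplitz],
      show hessenbergToeplitzCorner a b c (m + 2) 1 0 = a by
        simp [hessenbergToeplitzCorner, hessenbergToeplitz]]
    ring

end Hessenberg

theorem add_one_pow_sub_pow {R : Type*} [CommRing R] (x : R) (t : ℕ) :
    (x + 1) ^ t - x ^ t = ∑ i ∈ Finset.Icc 1 t, (t.choose i : R) * x ^ (t - i) := by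
  rw [add_comm, add_pow, Finset.range_eq_Ico,
    Finset.sum_eq_sum_Ico_succ_bot (by omega : 0 < t + 1), Finset.Ico_add_one_right_eq_Icc]
  simp only [one_pow, one_mul, Nat.choose_zero_right, Nat.cast_one, mul_one, Nat.sub_zero,
    add_sub_cancel_left]
  exact Finset.sum_congr rfl fun i _ => mul_comm _ _

theorem charmatrix_almostTransMat_apply (t : ℕ) (i j : Fin (t + 2)) :
    (almostTransMat t).charmatrix i j =
      if i = j then X
      else if ((i : ℕ) < j ∧ ¬((i : ℕ) = 0 ∧ (j : ℕ) = t + 1)) ∨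
          ((i : ℕ) = t + 1 ∧ (j : ℕ) = 0) then -1
      else 0 := by
  rcases eq_or_ne i j with rfl | hij
  · simp only [charmatrix_apply_eq, almostTransMat, if_true]
    rw [if_neg (by omega), map_zero, sub_zero]
  · rw [charmatrix_apply_ne _ _ _ hij, if_neg hij, almostTransMat]
    split_ifs <;> simp

theorem det_submatrix_succ_charmatrix_almostTransMat (t : ℕ) :
    ((almostTransMat t).charmatrix.submatrix Fin.succ Fin.succ).det = X ^ (t + 1) := by
  have htri : ((almostTransMat t).charmatrix.submatrix Fin.succ Fin.succ).BlockTriangular id := by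
    intro i j hji
    simp only [id, Fin.lt_def] at hji
    simp only [submatrix_apply, charmatrix_almostTransMat_apply, Fin.ext_iff, Fin.val_succ,
      Nat.add_one_ne_zero, false_and, and_false, not_false_eq_true, and_true, or_false]
    split_ifs <;> first | rfl | omega
  simp only [det_of_isUpperTriangular htri, submatrix_apply, charmatrix_almostTransMat_apply,
    if_true, Finset.prod_const, Finset.card_univ, Fintype.card_fin]

theorem submatrix_castSucc_charmatrix_almostTransMat (t : ℕ) :
    (almostTransMat t).charmatrix.submatrix Fin.castSucc Fin.succ =
      hessenbergToeplitzCorner X (-1) 0 (t + 1) := by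
  ext i j : 2
  simp only [submatrix_apply, charmatrix_almostTransMat_apply, hessenbergToeplitzCorner,
    hessenbergToeplitz, of_apply, Fin.ext_iff, Fin.le_def, Fin.val_castSucc, Fin.val_succ,
    Nat.add_one_ne_zero, and_false, or_false]
  have := i.isLt
  split_ifs <;> first | rfl | omega

theorem det_charmatrix_almostTransMat (t : ℕ) :
    (almostTransMat t).charmatrix.det = X ^ (t + 2) - ((X + 1) ^ t - X ^ t) := by
  have hB00 : (almostTransMat t).charmatrix 0 0 = X := by
    rw [charmatrix_almostTransMat_apply, if_pos rfl]
  have hBlast : (almostTransMat t).charmatrix (Fin.last (t + 1)) 0 = -1 := by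
    rw [charmatrix_almostTransMat_apply, if_neg (Fin.last_pos.ne'), if_pos (.inr ⟨rfl, rfl⟩)]
  have hBmid : ∀ i : Fin t, (almostTransMat t).charmatrix i.castSucc.succ 0 = 0 := fun i => by
    rw [charmatrix_almostTransMat_apply, if_neg (Fin.succ_ne_zero _), if_neg (by simp; omega)]
  have hsign : ((-1 : ℤ[X]) ^ t) ^ 2 = 1 := by rw [← pow_mul, pow_mul', neg_one_sq, one_pow]
  rw [det_succ_column_zero, Fin.sum_univ_succ, Fin.sum_univ_castSucc,
    Finset.sum_eq_zero fun i _ => by rw [hBmid i, mul_zero, zero_mul], Fin.succ_last,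
    Fin.succAbove_last, Fin.succAbove_zero, hB00, hBlast,
    det_submatrix_succ_charmatrix_almostTransMat, submatrix_castSucc_charmatrix_almostTransMat,
    det_hessenbergToeplitzCorner, show (-1 - X : ℤ[X]) = -(X + 1) by ring,
    neg_pow (X + 1 : ℤ[X]), neg_pow (X : ℤ[X]), Fin.val_zero, Fin.val_last, Nat.succ_eq_add_one]
  linear_combination (X ^ t - (X + 1) ^ t) * hsign

/-- `det(xI - A(T_t)) = x^{t+2} - Σ_{i=1}^t C(t,i) x^{t-i}`. -/
theorem stmt14 (t : ℕ) :
    (almostTransMat t).charpoly =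
      X ^ (t + 2) - ∑ i ∈ Finset.Icc 1 t, C ((t.choose i : ℤ)) * X ^ (t - i) := by
  simp only [charpoly, det_charmatrix_almostTransMat, map_natCast, add_one_pow_sub_pow]
end

section
/- For the almost transitive tournament T_t and any integer k ≥ 3, the k-th power sum of the eigenvalues of A(T_t), viewed as a function of t, is a polynomial in t of degree exactly k-2 with leading coefficient k/(k-2)!. For k = 2 it is a polynomial in t of degree at most 0. -/
/-!
Remove the back arc: `A(T_t) = N + E` where `N` is the transitive tournament without the arc
`0 → t+1` and `E = e_{t+1} e_0ᵀ`. For `m ≥ 2` we have `N^m = U^m` with `U` the transitive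
tournament, so `g_m(t) := (N^m)_{0,t+1} = C(t, m-1)` is a polynomial in `t` of degree `< m`
(and `g_0 = g_1 = 0`); moreover `tr N^k = 0`. Expanding `(N + E)^k` at the first factor `E`
and using that `E` has rank one gives `tr A^k = ∑_{l<k} (A^{k-1-l} N^l)_{0,t+1}` and
`(A^j N^i)_{0,t+1} = g_{j+i} + ∑_{l<j} g_l (A^{j-1-l} N^i)_{0,t+1}`. By induction on `j` the
last sum is a polynomial of degree `< j + i - 1`, hence `tr A^k - k g_{k-1}` has degree `< k - 2`.
-/

open Finset Matrix Polynomial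

theorem Nat.sum_Ioo_choose_sub (a b m : ℕ) :
    ∑ r ∈ Ioo a b, (r - a - 1).choose m = (b - a - 1).choose (m + 1) := by
  induction b with
  | zero => simp
  | succ b ih =>
    rcases lt_or_ge a b with hab | hab
    · rw [← Order.succ_eq_add_one, Ioo_succ_right_eq_Ioc, ← Ioo_insert_right hab,
        sum_insert (by simp), ih, Order.succ_eq_add_one,
        show b + 1 - a - 1 = (b - a - 1) + 1 by omega, Nat.choose_succ_succ', add_comm]
    · rw [show b + 1 - a - 1 = 0 by omega, Nat.choose_zero_succ]
      exact sum_eq_zero fun r hr => by simp at hr; omega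

theorem add_pow_eq_pow_add_sum {S : Type*} [Semiring S] (x y : S) (k : ℕ) :
    (x + y) ^ k = x ^ k + ∑ l ∈ range k, x ^ l * y * (x + y) ^ (k - 1 - l) := by
  induction k with
  | zero => simp
  | succ k ih =>
    rw [pow_succ', add_mul, sum_range_succ', ← add_assoc]
    nth_rw 1 [ih]
    simp only [mul_add, mul_sum, ← mul_assoc, ← pow_succ', pow_zero, one_mul, Nat.add_sub_cancel,
      Nat.sub_zero, Nat.sub_sub, add_comm 1]

theorem sub_pow_add_two_of_mul_eq_zero {S : Type*} [Ring S] {x y : S} (hxy : x * y = 0)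
    (hyx : y * x = 0) (hyy : y * y = 0) (m : ℕ) : (x - y) ^ (m + 2) = x ^ (m + 2) := by
  induction m with
  | zero => simp [sq, sub_mul, mul_sub, hxy, hyx, hyy]
  | succ m ih =>
    rw [pow_succ, ih, mul_sub, ← pow_succ, sub_eq_self, pow_succ, mul_assoc, hxy, mul_zero]

namespace Matrix

variable {ι R : Type*} [Fintype ι] [DecidableEq ι]

theorem mul_single_one_mul_apply [Semiring R] (M M' : Matrix ι ι R) (i j k l : ι) :
    (M * single j k (1 : R) * M') i l = M i j * M' k l := by
  simp [mul_apply, single, ite_and]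

theorem add_single_pow_mul_pow_apply [Semiring R] (N : Matrix ι ι R) (a b : ι) (j i : ℕ) :
    ((N + single b a (1 : R)) ^ j * N ^ i) a b
      = (N ^ (j + i)) a b
        + ∑ l ∈ range j, (N ^ l) a b * ((N + single b a (1 : R)) ^ (j - 1 - l) * N ^ i) a b := by
  rw [add_pow_eq_pow_add_sum, add_mul, sum_mul, add_apply, ← pow_add, sum_apply]
  congr 1
  refine sum_congr rfl fun l _ => ?_
  rw [Matrix.mul_assoc _ _ (N ^ i), mul_single_one_mul_apply]

theorem trace_add_single_pow [CommSemiring R] (N : Matrix ι ι R) (a b : ι) (k : ℕ) :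
    trace ((N + single b a (1 : R)) ^ k)
      = trace (N ^ k) + ∑ l ∈ range k, ((N + single b a (1 : R)) ^ (k - 1 - l) * N ^ l) a b := by
  rw [add_pow_eq_pow_add_sum, trace_add, trace_sum]
  congr 1
  refine sum_congr rfl fun l _ => ?_
  rw [trace_mul_cycle, trace_mul_single, MulOpposite.op_one, one_smul]

end Matrix

section TransitiveTournament

variable (R : Type*) [Semiring R] (n : ℕ)

def transitiveMat : Matrix (Fin n) (Fin n) R := of fun i j => if i < j then 1 else 0

variable {R n}

theorem transitiveMat_pow_succ_apply (m : ℕ) (i j : Fin n) :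
    (transitiveMat R n ^ (m + 1)) i j = if i < j then (((j : ℕ) - i - 1).choose m : R) else 0 := by
  induction m generalizing j with
  | zero => simp [transitiveMat]
  | succ m ih =>
    have hsum : (transitiveMat R n ^ (m + 2)) i j
        = ∑ r ∈ Ioo i j, ((((r : ℕ) - i - 1).choose m : ℕ) : R) := by
      rw [pow_succ, mul_apply, ← filter_lt_lt_eq_Ioo, sum_filter]
      refine sum_congr rfl fun r _ => ?_
      rw [ih r]
      by_cases hir : i < r <;> by_cases hrj : r < j <;> simp [transitiveMat, hir, hrj]
    have hval := sum_map (Ioo i j) Fin.valEmbedding fun r => (r - (i : ℕ) - 1).choose m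
    rw [Fin.map_valEmbedding_Ioo, Nat.sum_Ioo_choose_sub] at hval
    rw [hsum, ← Nat.cast_sum]
    simp only [Fin.valEmbedding_apply] at hval
    rw [← hval]
    split_ifs with hij
    · rfl
    · rw [Fin.lt_def, not_lt] at hij
      rw [show (j : ℕ) - i - 1 = 0 by omega, Nat.choose_zero_succ, Nat.cast_zero]

end TransitiveTournament

namespace Polynomial

theorem mul_mem_degreeLT {R : Type*} [Semiring R] {p q : R[X]} {a b : ℕ}
    (hp : p ∈ degreeLT R a) (hq : q ∈ degreeLT R b) : p * q ∈ degreeLT R (a + b) := by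
  rw [mem_degreeLT] at *
  refine (degree_mul_le p q).trans_lt ?_
  cases hp' : p.degree <;> cases hq' : q.degree <;> simp_all [← WithBot.coe_add, Nat.cast_withBot]
  omega

variable (R : Type*) [CommSemiring R]

noncomputable def evalNat : R[X] →ₗ[R] ℕ → R := LinearMap.pi fun t => leval (t : R)

@[simp]
theorem evalNat_apply (p : R[X]) (t : ℕ) : evalNat R p t = p.eval (t : R) := rfl

variable {R}

theorem mul_mem_map_evalNat_degreeLT {f g : ℕ → R} {a b : ℕ}
    (hf : f ∈ (degreeLT R a).map (evalNat R)) (hg : g ∈ (degreeLT R b).map (evalNat R)) :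
    f * g ∈ (degreeLT R (a + b)).map (evalNat R) := by
  obtain ⟨p, hp, rfl⟩ := hf
  obtain ⟨q, hq, rfl⟩ := hg
  exact ⟨p * q, mul_mem_degreeLT hp hq, by ext t; simp⟩

noncomputable def binomialPoly (K : Type*) [Field K] (d : ℕ) : K[X] :=
  C (d.factorial : K)⁻¹ * descPochhammer K d

variable (K : Type*) [Field K] [CharZero K]

theorem evalNat_binomialPoly (d : ℕ) :
    evalNat K (binomialPoly K d) = fun t => (t.choose d : K) := by
  ext t
  rw [evalNat_apply, binomialPoly, eval_mul, eval_C, descPochhammer_eval_eq_descFactorial,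
    Nat.descFactorial_eq_factorial_mul_choose, Nat.cast_mul, inv_mul_cancel_left₀]
  exact_mod_cast d.factorial_ne_zero

theorem degree_binomialPoly (d : ℕ) : (binomialPoly K d).degree = d := by
  rw [binomialPoly, degree_C_mul (inv_ne_zero (by exact_mod_cast d.factorial_ne_zero)),
    degree_eq_natDegree (monic_descPochhammer K d).ne_zero, descPochhammer_natDegree]

theorem leadingCoeff_binomialPoly (d : ℕ) :
    (binomialPoly K d).leadingCoeff = (d.factorial : K)⁻¹ := by
  rw [binomialPoly, leadingCoeff_C_mul_of_isUnit, (monic_descPochhammer K d).leadingCoeff, mul_one]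
  exact (inv_ne_zero (by exact_mod_cast d.factorial_ne_zero)).isUnit

variable {K}

theorem exists_evalNat_eq_of_sub_smul_choose_mem {f : ℕ → K} {c : K} (hc : c ≠ 0) {d : ℕ}
    (hf : f - c • (fun t => (t.choose d : K)) ∈ (degreeLT K d).map (evalNat K)) :
    ∃ q : K[X], evalNat K q = f ∧ q.natDegree = d ∧ q.leadingCoeff = c / d.factorial := by
  obtain ⟨p, hp, hpf⟩ := hf
  have hdeg : (C c * binomialPoly K d).degree = d := by
    rw [degree_C_mul hc, degree_binomialPoly]
  have hlt : p.degree < (C c * binomialPoly K d).degree := hdeg ▸ mem_degreeLT.mp hp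
  refine ⟨C c * binomialPoly K d + p, ?_, ?_, ?_⟩
  · rw [map_add, hpf, ← smul_eq_C_mul, map_smul, evalNat_binomialPoly, add_sub_cancel]
  · rw [natDegree_add_eq_left_of_degree_lt hlt, natDegree_eq_of_degree_eq_some hdeg]
  · rw [leadingCoeff_add_of_degree_lt' hlt, leadingCoeff_C_mul_of_isUnit hc.isUnit,
      leadingCoeff_binomialPoly, div_eq_mul_inv]

end Polynomial

namespace AlmostTransitive

def acyclicMat (t : ℕ) : Matrix (Fin (t + 2)) (Fin (t + 2)) ℤ :=
  transitiveMat ℤ (t + 2) - single 0 (Fin.last (t + 1)) 1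

theorem almostTransMat_eq_acyclicMat_add (t : ℕ) :
    almostTransMat t = acyclicMat t + single (Fin.last (t + 1)) 0 1 := by
  ext i j
  simp only [almostTransMat, acyclicMat, transitiveMat, Matrix.add_apply, Matrix.sub_apply, single,
    of_apply, Fin.lt_def, Fin.ext_iff, Fin.val_last, Fin.val_zero]
  split_ifs <;> omega

theorem acyclicMat_pow_add_two (t m : ℕ) :
    acyclicMat t ^ (m + 2) = transitiveMat ℤ (t + 2) ^ (m + 2) := by
  refine sub_pow_add_two_of_mul_eq_zero ?_ ?_ ?_ m
  · ext i j
    by_cases hj : j = Fin.last (t + 1)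
    · simp [hj, transitiveMat]
    · simp [mul_single_apply_of_ne _ _ _ _ _ hj]
  · ext i j
    by_cases hi : i = 0
    · simp [hi, transitiveMat, not_lt.2 (Fin.le_last _)]
    · simp [single_mul_apply_of_ne _ _ _ _ _ hi]
  · simp

theorem trace_acyclicMat_pow (t : ℕ) {k : ℕ} (hk : k ≠ 0) : trace (acyclicMat t ^ k) = 0 := by
  match k with
  | 1 => simp [acyclicMat, transitiveMat, trace, single_apply, Fin.ext_iff]; omega
  | m + 2 => simp [acyclicMat_pow_add_two, trace, transitiveMat_pow_succ_apply]

def pathCount (m t : ℕ) : ℚ := (acyclicMat t ^ m) 0 (Fin.last (t + 1))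

theorem pathCount_zero : pathCount 0 = 0 := by
  ext t
  simp [pathCount, one_apply, Fin.ext_iff]

theorem pathCount_one : pathCount 1 = 0 := by
  ext t
  simp [pathCount, acyclicMat, transitiveMat, Fin.last_pos]

theorem pathCount_add_two (m : ℕ) : pathCount (m + 2) = fun t => (t.choose (m + 1) : ℚ) := by
  ext t
  simp [pathCount, acyclicMat_pow_add_two, transitiveMat_pow_succ_apply]

theorem pathCount_mem (m : ℕ) : pathCount m ∈ (degreeLT ℚ m).map (evalNat ℚ) := by
  match m with
  | 0 => rw [pathCount_zero]; exact zero_mem _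
  | 1 => rw [pathCount_one]; exact zero_mem _
  | m + 2 =>
    refine ⟨binomialPoly ℚ (m + 1), mem_degreeLT.2 ?_, ?_⟩
    · rw [degree_binomialPoly]
      exact_mod_cast (by omega : m + 1 < m + 2)
    · rw [evalNat_binomialPoly, pathCount_add_two]

def mixedPowEntry (j i t : ℕ) : ℚ :=
  (almostTransMat t ^ j * acyclicMat t ^ i) 0 (Fin.last (t + 1))

theorem mixedPowEntry_eq (j i : ℕ) :
    mixedPowEntry j i
      = pathCount (j + i) + ∑ l ∈ range j, pathCount l * mixedPowEntry (j - 1 - l) i := by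
  ext t
  simp only [mixedPowEntry, pathCount, Pi.add_apply, Finset.sum_apply, Pi.mul_apply]
  rw [almostTransMat_eq_acyclicMat_add, add_single_pow_mul_pow_apply]
  push_cast
  rfl

theorem mixedPowEntry_sub_pathCount_mem (j i : ℕ) :
    mixedPowEntry j i - pathCount (j + i) ∈ (degreeLT ℚ (j + i - 1)).map (evalNat ℚ) := by
  induction j using Nat.strong_induction_on with
  | _ j ih =>
    rw [mixedPowEntry_eq, add_sub_cancel_left]
    refine Submodule.sum_mem _ fun l hl => ?_
    have hl : l < j := mem_range.mp hl
    have hmixed : mixedPowEntry (j - 1 - l) i ∈ (degreeLT ℚ (j - 1 - l + i)).map (evalNat ℚ) := by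
      rw [← sub_add_cancel (mixedPowEntry (j - 1 - l) i) (pathCount (j - 1 - l + i))]
      exact add_mem (Submodule.map_mono (degreeLT_mono (by omega)) (ih _ (by omega)))
        (pathCount_mem _)
    have := mul_mem_map_evalNat_degreeLT (pathCount_mem l) hmixed
    rwa [show l + (j - 1 - l + i) = j + i - 1 by omega] at this

theorem trace_almostTransMat_pow_sub_mem {k : ℕ} (hk : k ≠ 0) :
    (fun t => ((trace (almostTransMat t ^ k) : ℤ) : ℚ)) - (k : ℚ) • pathCount (k - 1)
      ∈ (degreeLT ℚ (k - 2)).map (evalNat ℚ) := by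
  have htrace : (fun t => ((trace (almostTransMat t ^ k) : ℤ) : ℚ))
      = ∑ l ∈ range k, mixedPowEntry (k - 1 - l) l := by
    ext t
    rw [almostTransMat_eq_acyclicMat_add, trace_add_single_pow, trace_acyclicMat_pow t hk, zero_add]
    simp [mixedPowEntry, almostTransMat_eq_acyclicMat_add]
  have hsmul : (k : ℚ) • pathCount (k - 1) = ∑ _l ∈ range k, pathCount (k - 1) := by
    rw [sum_const, card_range, Nat.cast_smul_eq_nsmul]
  rw [htrace, hsmul, ← sum_sub_distrib]
  refine Submodule.sum_mem _ fun l hl => ?_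
  have hl : l < k := mem_range.mp hl
  have := mixedPowEntry_sub_pathCount_mem (k - 1 - l) l
  rwa [show k - 1 - l + l = k - 1 by omega, show k - 1 - 1 = k - 2 by omega] at this

end AlmostTransitive

open AlmostTransitive

/-- The `k`-th power sum of the eigenvalues of `A(T_t)`, i.e.
`tr(A(T_t)^k)`, viewed as a function of `t`, is a polynomial in `t`; for `k ≥ 3` it
has degree exactly `k-2` with leading coefficient `k/(k-2)!`, and for `k = 2` it has
degree at most `0`. -/
theorem stmt15 (k : ℕ) (hk : 2 ≤ k) :
    ∃ q : Polynomial ℚ,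
      (∀ t : ℕ, ((Matrix.trace ((almostTransMat t) ^ k) : ℤ) : ℚ) = q.eval (t : ℚ)) ∧
      (3 ≤ k → q.natDegree = k - 2 ∧
        q.leadingCoeff = (k : ℚ) / ((k - 2).factorial : ℚ)) ∧
      (k = 2 → q.natDegree = 0) := by
  have hmem := trace_almostTransMat_pow_sub_mem (k := k) (by omega)
  rcases hk.eq_or_lt with rfl | hk3
  · obtain ⟨p, hp, hpf⟩ := hmem
    have hp0 : p = 0 := degree_eq_bot.mp (Nat.WithBot.lt_zero_iff.mp (mem_degreeLT.mp hp))
    refine ⟨0, fun t => ?_, by omega, fun _ => natDegree_zero⟩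
    simpa [hp0, pathCount_one, sub_eq_zero] using (congrFun hpf t).symm
  · obtain ⟨m, rfl⟩ : ∃ m, k = m + 3 := ⟨k - 3, by omega⟩
    rw [show m + 3 - 1 = m + 2 from rfl, pathCount_add_two] at hmem
    obtain ⟨q, hq, hdeg, hlead⟩ := exists_evalNat_eq_of_sub_smul_choose_mem (by positivity) hmem
    exact ⟨q, fun t => (congrFun hq t).symm, fun _ => ⟨hdeg, hlead⟩, fun h => by omega⟩
end

section
/- Let Γ_f = (2^e - 1) disjoint copies of the directed path on f-1 vertices together with one directed path on f-1+2^e vertices. Then the adjacency matrix A of Γ_f satisfies Char_A(x) = x^{2^e f}, and for each k in {0,1,...,e}: 𝟏ᵀA^k𝟏 ≡ 0 mod 2^e if k < f, and 𝟏ᵀA^k𝟏 ≡ f - k - 1 mod 2^e if k ≥ f. -/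
open Polynomial

/-- Adjacency matrix of the digraph `Γ_f`: the disjoint union of `2^e - 1` directed
paths on `f-1` vertices together with one directed path on `f-1+2^e` vertices
(arcs `(i, i+1)` along each path). -/
def gammaMat (e f : ℕ) :
    Matrix ((Fin (2 ^ e - 1) × Fin (f - 1)) ⊕ Fin (f - 1 + 2 ^ e))
      ((Fin (2 ^ e - 1) × Fin (f - 1)) ⊕ Fin (f - 1 + 2 ^ e)) ℤ :=
  fun x y =>
    match x, y with
    | Sum.inl (a, i), Sum.inl (b, j) => if a = b ∧ i.val + 1 = j.val then 1 else 0
    | Sum.inr i, Sum.inr j => if i.val + 1 = j.val then 1 else 0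
    | _, _ => 0

/-!
`Γ_f` is block diagonal: `2^e - 1` copies of the shift matrix `P_{f-1}` of a path (that is,
`1 ⊗ₖ P_{f-1}`) next to `P_{f-1+2^e}`. Since `(P_n ^ k) i j = [i + k = j]`, the matrix is
nilpotent, so its characteristic polynomial is `X ^ #vertices`, and
`𝟏ᵀA^k𝟏 = (2^e - 1)(f - 1 - k)₊ + (f - 1 + 2^e - k)₊`. For `k < f` this is `2^e (f - k)`;
for `f ≤ k ≤ e < 2^e` it is `f - k - 1 + 2^e`.
-/

open Matrix
open scoped Kronecker

namespace Matrix

variable {R : Type*}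

def pathMat (R : Type*) [Zero R] [One R] (n : ℕ) : Matrix (Fin n) (Fin n) R :=
  of fun i j => if (i : ℕ) + 1 = j then 1 else 0

theorem pathMat_pow_apply [Semiring R] (n k : ℕ) (i j : Fin n) :
    (pathMat R n ^ k) i j = if (i : ℕ) + k = j then 1 else 0 := by
  induction k generalizing j with
  | zero => simp [one_apply, Fin.ext_iff]
  | succ k ih =>
    rw [pow_succ, mul_apply]
    simp only [ih]
    simp only [pathMat, of_apply, boole_mul]
    rw [Fin.sum_univ_eq_sum_range (fun d => if (i : ℕ) + k = d then
      (if d + 1 = (j : ℕ) then (1 : R) else 0) else 0), Finset.sum_ite_eq]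
    simp only [Finset.mem_range]
    have := j.isLt
    split_ifs <;> first | rfl | omega

theorem pathMat_pow_eq_zero [Semiring R] {n k : ℕ} (h : n ≤ k) : pathMat R n ^ k = 0 := by
  ext i j
  rw [pathMat_pow_apply, if_neg (by omega), zero_apply]

theorem sum_pathMat_pow [Semiring R] (n k : ℕ) :
    ∑ i, ∑ j, (pathMat R n ^ k) i j = ((n - k : ℕ) : R) := by
  have row (i : Fin n) : ∑ j : Fin n, (if (i : ℕ) + k = j then (1 : R) else 0) =
      if (i : ℕ) + k < n then 1 else 0 := by
    rw [Fin.sum_univ_eq_sum_range (fun j => if (i : ℕ) + k = j then (1 : R) else 0),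
      Finset.sum_ite_eq]
    simp only [Finset.mem_range]
  have : (Finset.range n).filter (· + k < n) = Finset.range (n - k) := by
    ext i; simp only [Finset.mem_filter, Finset.mem_range]; omega
  simp only [pathMat_pow_apply, row]
  rw [Fin.sum_univ_eq_sum_range (fun i => if i + k < n then (1 : R) else 0), Finset.sum_boole,
    this, Finset.card_range]

theorem fromBlocks_zero_pow {l m : Type*} [Fintype l] [Fintype m] [DecidableEq l] [DecidableEq m]
    [Semiring R] (A : Matrix l l R) (D : Matrix m m R) (k : ℕ) :
    fromBlocks A 0 0 D ^ k = fromBlocks (A ^ k) 0 0 (D ^ k) := by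
  induction k with
  | zero => simp [fromBlocks_one]
  | succ k ih => simp [pow_succ, ih, fromBlocks_multiply]

theorem one_kronecker_pow {l m : Type*} [Fintype l] [Fintype m] [DecidableEq l] [DecidableEq m]
    [CommSemiring R] (A : Matrix m m R) (k : ℕ) :
    ((1 : Matrix l l R) ⊗ₖ A) ^ k = 1 ⊗ₖ (A ^ k) := by
  induction k with
  | zero => simp
  | succ k ih => rw [pow_succ, ih, ← mul_kronecker_mul, one_mul, pow_succ]

theorem sum_kronecker_apply {l m n p : Type*} [Fintype l] [Fintype m] [Fintype n] [Fintype p]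
    [CommSemiring R] (A : Matrix l m R) (B : Matrix n p R) :
    ∑ x, ∑ y, (A ⊗ₖ B) x y = (∑ i, ∑ j, A i j) * ∑ i, ∑ j, B i j := by
  simp only [Fintype.sum_prod_type, kronecker_apply, Finset.sum_mul_sum]

theorem sum_fromBlocks_apply {l m n p : Type*} [Fintype l] [Fintype m] [Fintype n] [Fintype p]
    [AddCommMonoid R] (A : Matrix n l R) (B : Matrix n m R) (C : Matrix p l R) (D : Matrix p m R) :
    ∑ x, ∑ y, fromBlocks A B C D x y =
      (∑ i, ∑ j, A i j) + (∑ i, ∑ j, B i j) + ((∑ i, ∑ j, C i j) + ∑ i, ∑ j, D i j) := by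
  simp only [Fintype.sum_sum_type, fromBlocks_apply₁₁, fromBlocks_apply₁₂, fromBlocks_apply₂₁,
    fromBlocks_apply₂₂, Finset.sum_add_distrib]
  abel

theorem charpoly_eq_X_pow_card_of_isNilpotent {n : Type*} [Fintype n] [DecidableEq n]
    [CommRing R] [IsDomain R] {M : Matrix n n R} (hM : IsNilpotent M) :
    M.charpoly = X ^ Fintype.card n :=
  sub_eq_zero.mp (isNilpotent_charpoly_sub_pow_of_isNilpotent hM).eq_zero

end Matrix

theorem gammaMat_eq_fromBlocks (e f : ℕ) :
    gammaMat e f = fromBlocks (1 ⊗ₖ pathMat ℤ (f - 1)) 0 0 (pathMat ℤ (f - 1 + 2 ^ e)) := by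
  ext (⟨a, i⟩ | i) (⟨b, j⟩ | j) <;> simp [gammaMat, pathMat, one_apply, ← ite_and, and_comm]

theorem gammaMat_pow (e f k : ℕ) :
    gammaMat e f ^ k =
      fromBlocks (1 ⊗ₖ (pathMat ℤ (f - 1) ^ k)) 0 0 (pathMat ℤ (f - 1 + 2 ^ e) ^ k) := by
  rw [gammaMat_eq_fromBlocks, fromBlocks_zero_pow, one_kronecker_pow]

theorem isNilpotent_gammaMat (e f : ℕ) : IsNilpotent (gammaMat e f) :=
  ⟨f - 1 + 2 ^ e, by
    rw [gammaMat_pow, pathMat_pow_eq_zero (Nat.le_add_right _ _), pathMat_pow_eq_zero le_rfl,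
      kronecker_zero, fromBlocks_zero]⟩

theorem charpoly_gammaMat {e f : ℕ} (hf : 1 ≤ f) : (gammaMat e f).charpoly = X ^ (2 ^ e * f) := by
  rw [charpoly_eq_X_pow_card_of_isNilpotent (isNilpotent_gammaMat e f)]
  congr 1
  simp only [Fintype.card_sum, Fintype.card_prod, Fintype.card_fin]
  zify [Nat.one_le_two_pow, hf]
  ring

theorem sum_gammaMat_pow (e f k : ℕ) :
    ∑ u, ∑ v, (gammaMat e f ^ k) u v =
      ((2 ^ e - 1 : ℕ) : ℤ) * ((f - 1 - k : ℕ) : ℤ) + ((f - 1 + 2 ^ e - k : ℕ) : ℤ) := by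
  rw [gammaMat_pow, sum_fromBlocks_apply, sum_kronecker_apply, sum_pathMat_pow, sum_pathMat_pow]
  simp [one_apply]

theorem sum_gammaMat_pow_modEq {e f k : ℕ} (hf : 1 ≤ f) (hk : k < 2 ^ e) :
    ∑ u, ∑ v, (gammaMat e f ^ k) u v ≡
      if k < f then 0 else (f : ℤ) - k - 1 [ZMOD 2 ^ e] := by
  rw [sum_gammaMat_pow, show (2 ^ e : ℤ) = ((2 ^ e : ℕ) : ℤ) by norm_cast]
  generalize 2 ^ e = q at *
  have hcopies : ((q - 1 : ℕ) : ℤ) = q - 1 := by omega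
  split_ifs with hkf
  · have hshort : ((f - 1 - k : ℕ) : ℤ) = f - 1 - k := by omega
    have hlong : ((f - 1 + q - k : ℕ) : ℤ) = f - 1 - k + q := by omega
    rw [hcopies, hshort, hlong]
    exact Int.modEq_zero_iff_dvd.mpr ⟨f - k, by ring⟩
  · have hshort : ((f - 1 - k : ℕ) : ℤ) = 0 := by omega
    have hlong : ((f - 1 + q - k : ℕ) : ℤ) = f - k - 1 + q := by omega
    rw [hshort, hlong, mul_zero, zero_add]
    exact Int.modEq_iff_dvd.mpr ⟨-1, by ring⟩

theorem stmt16_general (e f : ℕ) (hf : 1 ≤ f) :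
    (gammaMat e f).charpoly = X ^ (2 ^ e * f) ∧
    ∀ k : ℕ, k ≤ e →
      (∑ u, ∑ v, ((gammaMat e f) ^ k) u v) ≡
        (if k < f then 0 else (f : ℤ) - (k : ℤ) - 1) [ZMOD (2 ^ e : ℤ)] :=
  ⟨charpoly_gammaMat hf, fun _ hk => sum_gammaMat_pow_modEq hf (hk.trans_lt Nat.lt_two_pow_self)⟩

/-- `Γ_f` has characteristic polynomial `x^{2^e·f}`, and for
`0 ≤ k ≤ e`, `𝟏ᵀA(Γ_f)^k𝟏 ≡ 0 (mod 2^e)` if `k < f` and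
`𝟏ᵀA(Γ_f)^k𝟏 ≡ f - k - 1 (mod 2^e)` if `k ≥ f`. -/
theorem stmt16 (e f : ℕ) (hf : 1 ≤ f) (hfe : f ≤ e) :
    (gammaMat e f).charpoly = X ^ (2 ^ e * f) ∧
    ∀ k : ℕ, k ≤ e →
      (∑ u, ∑ v, ((gammaMat e f) ^ k) u v) ≡
        (if k < f then 0 else (f : ℤ) - (k : ℤ) - 1) [ZMOD (2 ^ e : ℤ)] :=
  stmt16_general e f hf
end

section
/- For every e ∈ ℕ there exists N such that for all n > N and every tuple (a₂,...,a_e) of integers with 2^{i-1} dividing a_i for each i, there exists an n×n {±1}-matrix M with all diagonal entries equal to 1 whose characteristic polynomial det(xI-M) = Σ b_i x^{n-i} satisfies b_i ≡ a_i mod 2^e for all i in {2,...,e}. -/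
/-!
Take `M = J - 2E`, where `J` is the all-ones matrix and `E` is the 0/1 matrix of the edges
`i → i + 1` for `i` in a finite set `S`. Then `1 - xM = U - xJ` with `U = 1 + 2xE` unipotent, and
`U w = 1` is solved by the geometric series `w = ∑ₖ (-2x)ᵏ Eᵏ 1`, so the matrix determinant lemma
gives `det (1 - xM) = 1 - ∑ₖ (-2)ᵏ wₖ xᵏ⁺¹`, where `wₖ` counts the windows `{i, …, i + k - 1} ⊆ S`.
Hence `b_{k+1} = -(-2)ᵏ wₖ`, and it remains to prescribe `w₁, …, w_e` modulo `2^e`. For `S` a union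
of separated runs of lengths `ℓ`, `wₖ = ∑ (ℓ + 1 - k)₊`, a triangular system that is solved by
choosing the numbers of runs of each length from the longest down.
-/

open Finset Matrix Polynomial

theorem Matrix.det_sub_smul_of_mulVec_eq_one {ι R : Type*} [Fintype ι] [DecidableEq ι]
    [CommRing R] {A : Matrix ι ι R} {w : ι → R} (hw : A *ᵥ w = 1) (y : R) :
    (A - y • of fun _ _ => 1).det = A.det * (1 - y * ∑ i, w i) := by
  have hfactor : A - y • (of fun _ _ => 1 : Matrix ι ι R) =
      A * (1 + (replicateCol Unit (-y • w) * replicateRow Unit (1 : ι → R) : Matrix ι ι R)) := by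
    rw [Matrix.mul_add, Matrix.mul_one, ← Matrix.mul_assoc, ← replicateCol_mulVec, mulVec_smul, hw,
      replicateCol_smul, Matrix.smul_mul, neg_smul, sub_eq_add_neg]
    congr
    ext i j
    simp [Matrix.mul_apply]
  rw [hfactor, det_mul, det_one_add_replicateCol_mul_replicateRow, one_dotProduct]
  simp [sub_eq_add_neg, Finset.mul_sum]

theorem Matrix.coeff_charpoly_card_sub_eq_coeff_charpolyRev {ι R : Type*} [Fintype ι]
    [DecidableEq ι] [CommRing R] [Nontrivial R] (M : Matrix ι ι R) {i : ℕ}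
    (hi : i ≤ Fintype.card ι) :
    M.charpoly.coeff (Fintype.card ι - i) = M.charpolyRev.coeff i := by
  rw [← reverse_charpoly, coeff_reverse, charpoly_natDegree_eq_dim, revAt_le hi]

namespace SignMatrixCharpoly

def runSet : List ℕ → Finset ℕ
  | [] => ∅
  | ℓ :: L => range ℓ ∪ (runSet L).image (· + (ℓ + 1))

def windowCount (S : Finset ℕ) (k : ℕ) : ℕ := #{i ∈ S | ∀ t < k, i + t ∈ S}

lemma mem_runSet_cons {ℓ p : ℕ} {L : List ℕ} :
    p ∈ runSet (ℓ :: L) ↔ p < ℓ ∨ ∃ q ∈ runSet L, p = q + (ℓ + 1) := by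
  simp [runSet, eq_comm]

lemma runSet_subset_range (L : List ℕ) : runSet L ⊆ range (L.map (· + 1)).sum := by
  induction L with
  | nil => simp [runSet]
  | cons ℓ L ih =>
    intro p hp
    rw [List.map_cons, List.sum_cons, mem_range]
    rcases mem_runSet_cons.mp hp with h | ⟨q, hq, rfl⟩
    · omega
    · have := mem_range.mp (ih hq); omega

lemma window_runSet_cons_iff {ℓ i j : ℕ} {L : List ℕ} (hj : 1 ≤ j) :
    (∀ t < j, i + t ∈ runSet (ℓ :: L)) ↔
      i + j ≤ ℓ ∨ ∃ q, i = q + (ℓ + 1) ∧ ∀ t < j, q + t ∈ runSet L := by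
  simp only [mem_runSet_cons]
  constructor
  · intro hw
    by_cases hiℓ : i + j ≤ ℓ
    · exact .inl hiℓ
    · refine .inr ?_
      have hgap : ∀ t < j, ℓ ≤ i + t → ℓ + 1 ≤ i + t := fun t ht hle => by
        rcases hw t ht with h | ⟨q, -, h⟩ <;> omega
      have hi : ℓ + 1 ≤ i := by
        by_cases h : ℓ ≤ i
        · simpa using hgap 0 hj (by omega)
        · have := hgap (ℓ - i) (by omega) (by omega); omega
      refine ⟨i - (ℓ + 1), by omega, fun t ht => ?_⟩
      rcases hw t ht with h | ⟨q, hq, h⟩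
      · omega
      · rwa [show i - (ℓ + 1) + t = q by omega]
  · rintro (h | ⟨q, rfl, hw⟩) t ht
    · exact .inl (by omega)
    · exact .inr ⟨q + t, hw t ht, by omega⟩

lemma windowCount_runSet_cons (ℓ : ℕ) (L : List ℕ) {j : ℕ} (hj : 1 ≤ j) :
    windowCount (runSet (ℓ :: L)) j = (ℓ + 1 - j) + windowCount (runSet L) j := by
  have hwin : ∀ {S : Finset ℕ} {i : ℕ}, (∀ t < j, i + t ∈ S) → i ∈ S := fun hw => hw 0 hj
  have hsplit : {i ∈ runSet (ℓ :: L) | ∀ t < j, i + t ∈ runSet (ℓ :: L)} =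
      range (ℓ + 1 - j) ∪ {i ∈ runSet L | ∀ t < j, i + t ∈ runSet L}.image (· + (ℓ + 1)) := by
    ext i
    simp only [mem_filter, mem_union, mem_range, mem_image]
    rw [and_iff_right_of_imp hwin, window_runSet_cons_iff hj]
    constructor
    · rintro (h | ⟨q, rfl, hw⟩)
      · exact .inl (by omega)
      · exact .inr ⟨q, ⟨hwin hw, hw⟩, rfl⟩
    · rintro (h | ⟨q, ⟨-, hw⟩, rfl⟩)
      · exact .inl (by omega)
      · exact .inr ⟨q, rfl, hw⟩
  have hdisj : Disjoint (range (ℓ + 1 - j))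
      ({i ∈ runSet L | ∀ t < j, i + t ∈ runSet L}.image (· + (ℓ + 1))) := by
    simp only [disjoint_left, mem_range, mem_image]
    rintro p hp ⟨q, -, rfl⟩
    omega
  rw [windowCount, hsplit, card_union_of_disjoint hdisj, card_range,
    card_image_of_injective _ (add_left_injective (ℓ + 1)), windowCount]

lemma windowCount_runSet (L : List ℕ) {j : ℕ} (hj : 1 ≤ j) :
    windowCount (runSet L) j = (L.map (· + 1 - j)).sum := by
  induction L with
  | nil => rfl
  | cons ℓ L ih => rw [windowCount_runSet_cons ℓ L hj, ih, List.map_cons, List.sum_cons]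

lemma exists_runs_modEq (m : ℕ) (hm : 0 < m) (r : ℕ → ℤ) (d : ℕ) : ∃ L : List ℕ,
    (∀ ℓ ∈ L, ℓ ≤ d) ∧ L.length ≤ d * m ∧
      ∀ j, 1 ≤ j → j ≤ d → ((L.map (· + 1 - j)).sum : ℤ) ≡ r j [ZMOD m] := by
  induction d generalizing r with
  | zero => exact ⟨[], by simp, by simp, fun j _ _ => by omega⟩
  | succ d ih =>
    -- `c` runs of the new maximal length `d + 1` fix the count of windows of width `d + 1`;
    -- the shorter runs then correct the remaining counts.
    set c : ℕ := (r (d + 1) % m).toNat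
    have hc : (c : ℤ) = r (d + 1) % m := Int.toNat_of_nonneg (Int.emod_nonneg _ (by omega))
    have hcm : c ≤ m := by have := Int.emod_lt_of_pos (r (d + 1)) (by omega : (0 : ℤ) < m); omega
    obtain ⟨L, hLd, hLlen, hL⟩ := ih fun j => r j - c * (d + 2 - j : ℕ)
    refine ⟨List.replicate c (d + 1) ++ L, ?_, ?_, fun j hj1 hjd => ?_⟩
    · simp only [List.mem_append, List.mem_replicate]
      rintro ℓ (⟨-, rfl⟩ | h)
      · rfl
      · exact (hLd ℓ h).trans d.le_succ
    · rw [List.length_append, List.length_replicate, Nat.succ_mul]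
      omega
    · rw [List.map_append, List.map_replicate, List.sum_append, List.sum_replicate, smul_eq_mul,
        Nat.cast_add, Nat.cast_mul]
      rcases hjd.lt_or_eq with hjd | rfl
      · have := (hL j hj1 (by omega)).add_left (c * (d + 1 + 1 - j : ℕ))
        rwa [add_sub_cancel] at this
      · have hzero : (L.map (· + 1 - (d + 1))).sum = 0 :=
          List.sum_eq_zero fun x hx => by
            obtain ⟨ℓ, hℓ, rfl⟩ := List.mem_map.mp hx
            have := hLd ℓ hℓ
            omega
        rw [hzero, show d + 1 + 1 - (d + 1) = 1 by omega, hc]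
        simpa using Int.mod_modEq (r (d + 1)) m

theorem exists_windowCount_modEq (m d : ℕ) (hm : 0 < m) (r : ℕ → ℤ) :
    ∃ S : Finset ℕ, S ⊆ range (d * m * (d + 1)) ∧
      ∀ j, 1 ≤ j → j ≤ d → (windowCount S j : ℤ) ≡ r j [ZMOD m] := by
  obtain ⟨L, hLd, hLlen, hL⟩ := exists_runs_modEq m hm r d
  refine ⟨runSet L, (runSet_subset_range L).trans (range_subset_range.mpr ?_), fun j hj1 hjd => ?_⟩
  · calc (L.map (· + 1)).sum ≤ L.length * (d + 1) := by
          have h := List.sum_le_card_nsmul (L.map (· + 1)) (d + 1) fun x hx => by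
            obtain ⟨ℓ, hℓ, rfl⟩ := List.mem_map.mp hx
            exact Nat.succ_le_succ (hLd ℓ hℓ)
          rwa [List.length_map, smul_eq_mul] at h
      _ ≤ d * m * (d + 1) := Nat.mul_le_mul_right _ hLlen
  · rw [windowCount_runSet L hj1]
    exact hL j hj1 hjd

variable {R : Type*} {n : ℕ} {S : Finset ℕ}

def stepMatrix [Zero R] [One R] (n : ℕ) (S : Finset ℕ) : Matrix (Fin n) (Fin n) R :=
  of fun i j => if (j : ℕ) = i + 1 ∧ (i : ℕ) ∈ S then 1 else 0

lemma stepMatrix_mulVec [NonAssocSemiring R] (hS : ∀ p ∈ S, p + 1 < n) (f : ℕ → R) :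
    stepMatrix n S *ᵥ (fun i : Fin n => f i) =
      fun i : Fin n => if (i : ℕ) ∈ S then f (i + 1) else 0 := by
  ext i
  simp only [mulVec, dotProduct, stepMatrix, of_apply, ite_mul, one_mul, zero_mul]
  split_ifs with hi
  · rw [sum_eq_single ⟨i + 1, hS i hi⟩] <;> simp +contextual [hi, Fin.ext_iff]
  · simp [hi]

lemma det_one_sub_smul_stepMatrix [CommRing R] (z : R) :
    (1 - z • stepMatrix n S : Matrix (Fin n) (Fin n) R).det = 1 := by
  have htri : (1 - z • stepMatrix n S : Matrix (Fin n) (Fin n) R).BlockTriangular id := by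
    intro i j hij
    have : (j : ℕ) < i := Fin.lt_def.mp hij
    simp only [Matrix.sub_apply, Matrix.smul_apply, stepMatrix, of_apply, one_apply, Fin.ext_iff]
    rw [if_neg (by omega), if_neg (by omega), smul_zero, sub_zero]
  rw [det_of_isUpperTriangular htri]
  refine prod_eq_one fun i _ => ?_
  simp [stepMatrix]

lemma forall_lt_succ_add_mem_iff {p k : ℕ} :
    (∀ t < k + 1, p + t ∈ S) ↔ p ∈ S ∧ ∀ t < k, p + 1 + t ∈ S := by
  simp only [Nat.forall_lt_succ_left, add_zero, Nat.add_assoc, Nat.add_comm 1]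

def windowSeries [Semiring R] (n : ℕ) (S : Finset ℕ) (z : R) (p : ℕ) : R :=
  ∑ k ∈ range n, if ∀ t < k, p + t ∈ S then z ^ k else 0

lemma one_sub_smul_stepMatrix_mulVec_windowSeries [CommRing R] (hS : ∀ p ∈ S, p + 1 < n)
    (z : R) :
    (1 - z • stepMatrix n S) *ᵥ (fun i : Fin n => windowSeries n S z i) = 1 := by
  ext i
  rw [sub_mulVec, one_mulVec, smul_mulVec, stepMatrix_mulVec hS]
  set g : ℕ → R := fun k => if ∀ t < k, (i : ℕ) + t ∈ S then z ^ k else 0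
  have hshift : z * (if (i : ℕ) ∈ S then windowSeries n S z (i + 1) else 0) =
      ∑ k ∈ range n, g (k + 1) := by
    simp only [g, forall_lt_succ_add_mem_iff]
    split_ifs with hi
    · simp only [windowSeries, mul_sum, hi, true_and, mul_ite, mul_zero, pow_succ']
    · simp [hi]
  have hlast : g n = 0 := by
    have := i.isLt
    refine if_neg fun hw => ?_
    have := hS _ (hw (n - 1) (by omega))
    omega
  rw [Pi.sub_apply, Pi.smul_apply, smul_eq_mul, hshift, windowSeries, ← sum_sub_distrib,
    sum_range_sub' g n, hlast]
  simp [g]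

theorem charpolyRev_ones_sub_smul_stepMatrix [CommRing R] (hS : ∀ p ∈ S, p + 1 < n) (c : R) :
    (of (fun _ _ => 1) - c • stepMatrix n S : Matrix (Fin n) (Fin n) R).charpolyRev =
      1 - ∑ k ∈ range n,
        C ((-c) ^ k * #{i : Fin n | ∀ t < k, (i : ℕ) + t ∈ S}) * (X : R[X]) ^ (k + 1) := by
  set z : R[X] := -(C c * X)
  have hmat : 1 - (X : R[X]) •
        (of (fun _ _ => 1) - c • stepMatrix n S : Matrix (Fin n) (Fin n) R).map C =
      (1 - z • stepMatrix n S : Matrix (Fin n) (Fin n) R[X]) - (X : R[X]) • of fun _ _ => 1 := by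
    ext i j : 1
    simp only [Matrix.sub_apply, Matrix.smul_apply, Matrix.map_apply, of_apply, stepMatrix, z]
    split_ifs
    · simp
      ring
    · simp
  rw [charpolyRev, hmat, det_sub_smul_of_mulVec_eq_one
    (one_sub_smul_stepMatrix_mulVec_windowSeries hS z), det_one_sub_smul_stepMatrix, one_mul]
  congr 1
  simp only [windowSeries]
  rw [sum_comm, mul_sum]
  refine sum_congr rfl fun k _ => ?_
  rw [← sum_filter, sum_const, nsmul_eq_mul]
  simp only [z, map_mul, map_pow, map_neg, map_natCast]
  ring

theorem coeff_charpoly_ones_sub_smul_stepMatrix [CommRing R] (hS : ∀ p ∈ S, p + 1 < n) (c : R)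
    {i : ℕ} (hi : 1 ≤ i) (hin : i ≤ n) :
    (of (fun _ _ => 1) - c • stepMatrix n S : Matrix (Fin n) (Fin n) R).charpoly.coeff (n - i) =
      -((-c) ^ (i - 1) * #{j : Fin n | ∀ t < i - 1, (j : ℕ) + t ∈ S}) := by
  nontriviality R
  have hrev := coeff_charpoly_card_sub_eq_coeff_charpolyRev
    (of (fun _ _ => 1) - c • stepMatrix n S : Matrix (Fin n) (Fin n) R) (i := i)
    (by rwa [Fintype.card_fin])
  rw [Fintype.card_fin] at hrev
  rw [hrev, charpolyRev_ones_sub_smul_stepMatrix hS, coeff_sub, coeff_one, if_neg (by omega),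
    finsetSum_coeff, zero_sub, sum_eq_single (i - 1)]
  · rw [coeff_C_mul_X_pow, if_pos (by omega)]
  · intro k _ hk
    rw [coeff_C_mul_X_pow, if_neg (by omega)]
  · intro h
    exact absurd (mem_range.mpr (by omega)) h

lemma card_window_eq_windowCount (hS : S ⊆ range n) {k : ℕ} (hk : 1 ≤ k) :
    #{i : Fin n | ∀ t < k, (i : ℕ) + t ∈ S} = windowCount S k := by
  refine card_bij (fun i _ => i.val) (fun i hi => ?_) (fun i _ j _ => Fin.ext) fun p hp => ?_
  · have hw := (mem_filter.mp hi).2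
    exact mem_filter.mpr ⟨by simpa using hw 0 hk, hw⟩
  · obtain ⟨hpS, hw⟩ := mem_filter.mp hp
    exact ⟨⟨p, mem_range.mp (hS hpS)⟩, mem_filter.mpr ⟨mem_univ _, hw⟩, rfl⟩

lemma neg_neg_two_pow_mul_modEq_of_dvd {k : ℕ} {a w m : ℤ} (ha : 2 ^ k ∣ a)
    (hw : w ≡ (-1) ^ (k + 1) * (a / 2 ^ k) [ZMOD m]) : -((-2) ^ k * w) ≡ a [ZMOD m] := by
  obtain ⟨b, rfl⟩ := ha
  rw [Int.mul_ediv_cancel_left _ (by positivity)] at hw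
  have hsign : (-1 : ℤ) ^ k * (-1) ^ (k + 1) = -1 := by
    rw [← pow_add, show k + (k + 1) = 2 * k + 1 by ring, pow_succ, pow_mul]
    norm_num
  calc -((-2) ^ k * w) ≡ -((-2) ^ k * ((-1) ^ (k + 1) * b)) [ZMOD m] := (hw.mul_left _).neg
    _ = 2 ^ k * b := by rw [neg_pow]; linear_combination (-(2 ^ k * b)) * hsign

end SignMatrixCharpoly

open SignMatrixCharpoly

/-- Theorem 1.3: For every `e` there exists `N` such that for all
`n > N` and every tuple `(a₂,…,a_e)` of integers with `2^{i-1} ∣ a_i`, there is an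
`n×n` `{±1}`-matrix `M` with unit diagonal whose characteristic polynomial
coefficients satisfy `b_i ≡ a_i (mod 2^e)` for `i ∈ {2,…,e}` (where
`b_i = coeff (n - i)` of `det(xI - M)`). -/
theorem stmt17 (e : ℕ) :
    ∃ N : ℕ, ∀ n : ℕ, n > N → ∀ a : ℕ → ℤ,
      (∀ i, 2 ≤ i → i ≤ e → (2 : ℤ) ^ (i - 1) ∣ a i) →
      ∃ M : Matrix (Fin n) (Fin n) ℤ,
        (∀ i j, M i j = 1 ∨ M i j = -1) ∧ (∀ i, M i i = 1) ∧
        ∀ i, 2 ≤ i → i ≤ e → M.charpoly.coeff (n - i) ≡ a i [ZMOD (2 ^ e : ℤ)] := by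
  refine ⟨e * 2 ^ e * (e + 1), fun n hn a ha => ?_⟩
  obtain ⟨S, hSrange, hS⟩ := exists_windowCount_modEq (2 ^ e) e (by positivity)
    fun j => (-1) ^ (j + 1) * (a (j + 1) / 2 ^ j)
  have hSn : ∀ p ∈ S, p + 1 < n := fun p hp => by have := mem_range.mp (hSrange hp); omega
  have hSsub : S ⊆ range n := hSrange.trans (range_subset_range.mpr hn.le)
  have hen : e < n := by
    have : e ≤ e * 2 ^ e * (e + 1) := by
      rw [mul_assoc]
      exact Nat.le_mul_of_pos_right _ (by positivity)
    omega
  refine ⟨of (fun _ _ => 1) - (2 : ℤ) • stepMatrix n S, fun i j => ?_, fun i => ?_,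
    fun i hi2 hie => ?_⟩
  · simp only [Matrix.sub_apply, Matrix.smul_apply, of_apply, stepMatrix]
    split_ifs <;> norm_num
  · simp [stepMatrix]
  · obtain ⟨k, rfl⟩ : ∃ k, i = k + 1 := ⟨i - 1, by omega⟩
    rw [coeff_charpoly_ones_sub_smul_stepMatrix hSn 2 (by omega) (by omega), Nat.add_sub_cancel,
      card_window_eq_windowCount hSsub (by omega)]
    exact neg_neg_two_pow_mul_modEq_of_dvd (by simpa using ha _ hi2 hie)
      (hS k (by omega) (by omega))
end
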